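/- arXiv:2409.16688 — 4 statements merged into one kernel-verified Lean document; each statement's English description precedes it below -/
import Mathlib

section
/- For any integer k ≥ 1, the number of cycles of length k+2 in a finite simple graph G satisfies #C_{k+2}(G) ≤ (2/k)·α(G)·#P_k(G), where α(G) is the arboricity and #P_k(G) is the number of paths of length k. -/
open SimpleGraph Finset MeasureTheory ProbabilityTheory

/-- The arboricity of a graph: the minimal number `k` such that the edge set of `G`
can be partitioned into `k` forests. -/
noncomputable def arboricity {V : Type*} (G : SimpleGraph V) : ℕ :=
  sInf {k : ℕ | ∃ f : Sym2 V → Fin k,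
    ∀ i : Fin k, (SimpleGraph.fromEdgeSet {e | e ∈ G.edgeSet ∧ f e = i}).IsAcyclic}

/-- The degeneracy of a graph: the smallest `d` such that every nonempty subgraph
contains a vertex of induced degree at most `d`. -/
noncomputable def degeneracy {V : Type*} [Fintype V] (G : SimpleGraph V) : ℕ :=
  sInf {d : ℕ | ∀ s : Finset V, s.Nonempty →
    ∃ v ∈ s, ((s : Set V) ∩ {u | G.Adj v u}).ncard ≤ d}

/-- The degree of a vertex. -/
noncomputable def deg {n : ℕ} (G : SimpleGraph (Fin n)) (v : Fin n) : ℕ :=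
  {u | G.Adj v u}.ncard

/-- The number of paths with `p` edges in `G`, counted once per geometric path
(tuples of `p+1` pairwise distinct vertices with consecutive vertices adjacent,
normalized up to reversal by requiring the first endpoint to be at most the last). -/
noncomputable def pathCount {n : ℕ} (G : SimpleGraph (Fin n)) (p : ℕ) : ℕ :=
  {l : Fin (p + 1) → Fin n | Function.Injective l ∧
    (∀ i : Fin p, G.Adj (l i.castSucc) (l i.succ)) ∧ l 0 ≤ l (Fin.last p)}.ncard

/-- The number of cycles of length `k` in `G`: tuples of `k` pairwise distinct vertices,
cyclically consecutive ones adjacent, counted up to rotation and reflection. -/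
noncomputable def cycleCount {n : ℕ} (G : SimpleGraph (Fin n)) (k : ℕ) : ℕ :=
  {l : Fin k → Fin n | Function.Injective l ∧
    ∀ i j : Fin k, ((i : ℕ) + 1) % k = (j : ℕ) → G.Adj (l i) (l j)}.ncard / (2 * k)

/-- Number of cycles of length `k` containing three cyclically consecutive vertices
with monotonic indices, counted up to rotation and reflection. -/
noncomputable def monoCycleCount {n : ℕ} (G : SimpleGraph (Fin n)) (k : ℕ) : ℕ :=
  {l : Fin k → Fin n | Function.Injective l ∧
    (∀ i j : Fin k, ((i : ℕ) + 1) % k = (j : ℕ) → G.Adj (l i) (l j)) ∧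
    ∃ i j t : Fin k, ((i : ℕ) + 1) % k = (j : ℕ) ∧ ((j : ℕ) + 1) % k = (t : ℕ) ∧
      ((l i < l j ∧ l j < l t) ∨ (l t < l j ∧ l j < l i))}.ncard / (2 * k)

/-- Path count extended to integer lengths, with the convention `#P_p = 1` for `p < 0`. -/
noncomputable def pathCountExt {n : ℕ} (G : SimpleGraph (Fin n)) (p : ℤ) : ℕ :=
  if 0 ≤ p then pathCount G p.toNat else 1

/-- `S₂*`: the number of low-2-stars, `∑ i, dᵢ⁻ ⬝ (dᵢ - 1)` where `dᵢ⁻` is the number of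
neighbors of `ηᵢ` with smaller index. -/
noncomputable def S2star {n : ℕ} (G : SimpleGraph (Fin n)) : ℕ :=
  ∑ i : Fin n, {j | G.Adj i j ∧ j < i}.ncard * (deg G i - 1)


section Aux

lemma myIsAcyclic_anti {V : Type*} {G H : SimpleGraph V} (h : G ≤ H) (hH : H.IsAcyclic) :
    G.IsAcyclic := fun _ c hc => hH (c.mapLe h) ((Walk.mapLe_isCycle h).mpr hc)

lemma my_exists_leaf {V : Type*} [Fintype V] {F : SimpleGraph V} (hF : F.IsAcyclic)
    {a b : V} (hab : F.Adj a b) : ∃ u x, F.Adj u x ∧ ∀ w, F.Adj u w → w = x := by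
  classical
  set S : Set ℕ := {L | ∃ (u : V) (v : V) (p : F.Walk u v), p.IsPath ∧ p.length = L} with hS
  have h1 : (1 : ℕ) ∈ S := by
    refine ⟨a, b, Walk.cons hab Walk.nil, ?_, by simp⟩
    simp [Walk.cons_isPath_iff, hab.ne]
  have bdd : BddAbove S := by
    refine ⟨Fintype.card V, fun L hL => ?_⟩
    obtain ⟨u, v, p, hp, rfl⟩ := hL
    exact le_of_lt hp.length_lt
  have hLmem : sSup S ∈ S := Nat.sSup_mem ⟨1, h1⟩ bdd
  have hL1 : 1 ≤ sSup S := le_csSup bdd h1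
  obtain ⟨u, v, p, hp, hlen⟩ := hLmem
  cases p with
  | nil => simp at hlen; omega
  | cons h' q =>
    rename_i x
    have hq : q.IsPath := ((Walk.cons_isPath_iff _ _).mp hp).1
    have hu : u ∉ q.support := ((Walk.cons_isPath_iff _ _).mp hp).2
    refine ⟨u, x, h', fun w hw => ?_⟩
    by_contra hwx
    have hwu : w ≠ u := fun e => hw.ne' e
    by_cases hws : w ∈ (Walk.cons h' q).support
    · have hwq : w ∈ q.support := by
        have := Walk.support_cons h' q ▸ hws
        simp only [List.mem_cons] at this
        tauto
      set r := q.takeUntil w hwq with hr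
      have hrp : r.IsPath := hq.takeUntil hwq
      have hur : u ∉ r.support := fun hmem => hu (q.support_takeUntil_subset hwq hmem)
      have hcons : (Walk.cons h' r).IsPath := hrp.cons hur (h := h')
      have hedge : s(w, u) ∉ (Walk.cons h' r).edges := by
        intro hmem
        have hmem' := Walk.edges_cons h' r ▸ hmem
        simp only [List.mem_cons, Sym2.eq_iff] at hmem'
        rcases hmem' with (⟨e1, e2⟩ | ⟨e1, e2⟩) | h0
        · exact hwu e1
        · exact hwx e1
        · exact hur (r.snd_mem_support_of_mem_edges h0)
      have hcy : (Walk.cons hw.symm (Walk.cons h' r)).IsCycle :=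
        (Walk.cons_isCycle_iff _ _).mpr ⟨hcons, hedge⟩
      exact hF _ hcy
    · have hext : (Walk.cons hw.symm (Walk.cons h' q)).IsPath := hp.cons hws (h := hw.symm)
      have : sSup S + 1 ∈ S := ⟨w, v, _, hext, by simp [hlen]⟩
      have := le_csSup bdd this
      omega

lemma my_forest_orient {V : Type*} [Fintype V] {F : SimpleGraph V} (hF : F.IsAcyclic) :
    ∃ g : V → Option V, ∀ u v, F.Adj u v → g u = some v ∨ g v = some u := by
  classical
  suffices h : ∀ (m : ℕ) (F : SimpleGraph V), F.IsAcyclic → F.edgeSet.ncard ≤ m →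
      ∃ g : V → Option V, ∀ u v, F.Adj u v → g u = some v ∨ g v = some u from
    h F.edgeSet.ncard F hF le_rfl
  intro m
  induction m with
  | zero =>
    intro F hF hcard
    refine ⟨fun _ => none, fun u v huv => ?_⟩
    have h0 : F.edgeSet = ∅ := Set.ncard_eq_zero (Set.toFinite _) |>.mp (Nat.le_zero.mp hcard)
    exact absurd (h0 ▸ (mem_edgeSet F).mpr huv) (Set.notMem_empty _)
  | succ m ih =>
    intro F hF hcard
    by_cases hne : ∃ a b, F.Adj a b
    · obtain ⟨a, b, hab⟩ := hne
      obtain ⟨u, x, hux, hleaf⟩ := my_exists_leaf hF hab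
      set F' := F.deleteEdges {s(u, x)} with hF'
      have hle : F' ≤ F := F.deleteEdges_le _
      have hacy : F'.IsAcyclic := myIsAcyclic_anti hle hF
      have hcard' : F'.edgeSet.ncard ≤ m := by
        have he : F'.edgeSet = F.edgeSet \ {s(u, x)} := F.edgeSet_deleteEdges _
        have hmem : s(u, x) ∈ F.edgeSet := (mem_edgeSet F).mpr hux
        have : F'.edgeSet.ncard < F.edgeSet.ncard := by
          rw [he]
          exact Set.ncard_lt_ncard (by
            constructor
            · exact Set.diff_subset
            · intro hsub
              exact (hsub hmem).2 rfl) (Set.toFinite _)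
        omega
      obtain ⟨g', hg'⟩ := ih F' hacy hcard'
      refine ⟨fun w => if w = u then some x else g' w, fun c d hcd => ?_⟩
      by_cases hcu : c = u
      · subst hcu
        left; simp [hleaf d hcd]
      by_cases hdu : d = u
      · subst hdu
        right; simp [hleaf c hcd.symm]
      · have hcd' : F'.Adj c d := by
          rw [hF', deleteEdges_adj]
          refine ⟨hcd, ?_⟩
          simp only [Set.mem_singleton_iff, Sym2.eq_iff]
          rintro (⟨rfl, rfl⟩ | ⟨rfl, rfl⟩)
          · exact hcu rfl
          · exact hdu rfl
        rcases hg' c d hcd' with h0 | h0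
        · left; simp [hcu, h0]
        · right; simp [hdu, h0]
    · push_neg at hne
      exact ⟨fun _ => none, fun u v huv => absurd huv (hne u v)⟩

lemma my_subsingleton_acyclic {V : Type*} {s : Set (Sym2 V)} (hs : s.Subsingleton) :
    (SimpleGraph.fromEdgeSet s).IsAcyclic := by
  intro v c hc
  have hlen : 3 ≤ c.length := hc.three_le_length
  have hnodup : c.edges.Nodup := hc.edges_nodup
  have hlength : c.edges.length = c.length := c.length_edges
  have hmem : ∀ e ∈ c.edges, e ∈ s := by
    intro e he
    have := c.edges_subset_edgeSet he
    rw [edgeSet_fromEdgeSet] at this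
    exact this.1
  have h0 : (0 : ℕ) < c.edges.length := by omega
  have h1 : (1 : ℕ) < c.edges.length := by omega
  have := List.Nodup.get_inj_iff hnodup (i := ⟨0, h0⟩) (j := ⟨1, h1⟩)
  have heq : c.edges.get ⟨0, h0⟩ = c.edges.get ⟨1, h1⟩ :=
    hs (hmem _ (c.edges.get_mem _)) (hmem _ (c.edges.get_mem _))
  have h2 := this.mp heq
  simp [Fin.ext_iff] at h2

lemma my_arboricity_decomp {V : Type*} [Fintype V] [DecidableEq V] (G : SimpleGraph V) :
    ∃ f : Sym2 V → Fin (arboricity G),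
      ∀ i : Fin (arboricity G),
        (SimpleGraph.fromEdgeSet {e | e ∈ G.edgeSet ∧ f e = i}).IsAcyclic := by
  classical
  have hne : {k : ℕ | ∃ f : Sym2 V → Fin k,
      ∀ i : Fin k, (SimpleGraph.fromEdgeSet {e | e ∈ G.edgeSet ∧ f e = i}).IsAcyclic}.Nonempty := by
    refine ⟨Fintype.card (Sym2 V) + 1,
      fun e => (Fintype.equivFin (Sym2 V) e).castLE (Nat.le_succ _), fun i => ?_⟩
    apply my_subsingleton_acyclic
    intro e1 he1 e2 he2
    have : (Fintype.equivFin (Sym2 V) e1).castLE (Nat.le_succ _)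
        = (Fintype.equivFin (Sym2 V) e2).castLE (Nat.le_succ _) := he1.2.trans he2.2.symm
    have h2 := Fin.castLE_injective (Nat.le_succ _) this
    exact (Fintype.equivFin (Sym2 V)).injective h2
  exact Nat.sInf_mem hne

end Aux

/-- For `k ≥ 1`, `#C_{k+2}(G) ≤ (2/k) ⬝ α(G) ⬝ #P_k(G)`. -/
theorem cycleCount_le_arboricity_mul_pathCount (k : ℕ) (hk : 1 ≤ k) (n : ℕ)
    (G : SimpleGraph (Fin n)) :
    (cycleCount G (k + 2) : ℝ) ≤ 2 / k * arboricity G * pathCount G k := by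
  classical
  obtain ⟨f, hf⟩ := my_arboricity_decomp G
  choose g hg using fun i => my_forest_orient (hf i)
  have hor : ∀ u v : Fin n, G.Adj u v →
      g (f s(u, v)) u = some v ∨ g (f s(u, v)) v = some u := by
    intro u v h
    apply hg
    rw [fromEdgeSet_adj]
    exact ⟨⟨h, rfl⟩, h.ne⟩
  set A : Set (Fin (k + 2) → Fin n) := {l | Function.Injective l ∧
    ∀ i j : Fin (k + 2), ((i : ℕ) + 1) % (k + 2) = (j : ℕ) → G.Adj (l i) (l j)} with hA
  set B : Set (Fin (k + 1) → Fin n) := {l | Function.Injective l ∧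
    (∀ i : Fin k, G.Adj (l i.castSucc) (l i.succ)) ∧ l 0 ≤ l (Fin.last k)} with hB
  set lst : Fin (k + 2) := Fin.last (k + 1) with hlst
  set rv : (Fin (k + 2) → Fin n) → (Fin (k + 2) → Fin n) := fun l i => l i.rev with hrv
  set A' : Set (Fin (k + 2) → Fin n) :=
    {l | l ∈ A ∧ g (f s(l 0, l lst)) (l 0) = some (l lst)} with hA'
  -- reversal stays in A
  have hrevA : ∀ l ∈ A, rv l ∈ A := by
    rintro l ⟨hinj, hadj⟩
    refine ⟨hinj.comp Fin.rev_injective, ?_⟩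
    intro i j hij
    have hi : (i : ℕ) < k + 2 := i.isLt
    have hj : (j : ℕ) < k + 2 := j.isLt
    have hri : ((i.rev : Fin (k+2)) : ℕ) = k + 1 - (i : ℕ) := by
      rw [Fin.val_rev]; omega
    have hrj : ((j.rev : Fin (k+2)) : ℕ) = k + 1 - (j : ℕ) := by
      rw [Fin.val_rev]; omega
    have key : (((j.rev : Fin (k+2)) : ℕ) + 1) % (k + 2) = ((i.rev : Fin (k+2)) : ℕ) := by
      rw [hri, hrj]
      rcases Nat.lt_or_ge ((i : ℕ) + 1) (k + 2) with h | h
      · rw [Nat.mod_eq_of_lt h] at hij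
        have h1 : k + 1 - (j : ℕ) + 1 = k + 1 - (i : ℕ) := by omega
        rw [h1, Nat.mod_eq_of_lt (by omega)]
      · have h1 : (i : ℕ) + 1 = k + 2 := by omega
        rw [h1, Nat.mod_self] at hij
        have h2 : (j : ℕ) = 0 := hij.symm
        have h3 : (i : ℕ) = k + 1 := by omega
        rw [h2, h3, show k + 1 - 0 + 1 = k + 2 from by omega, Nat.mod_self]
        omega
    exact (hadj j.rev i.rev key).symm
  -- every cycle tuple or its reversal is in A'
  have hcover : ∀ l ∈ A, l ∈ A' ∨ rv l ∈ A' := by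
    intro l hl
    have hadj : G.Adj (l 0) (l lst) := by
      refine (hl.2 lst 0 ?_).symm
      simp [hlst, Nat.mod_self]
    rcases hor (l 0) (l lst) hadj with h | h
    · exact Or.inl ⟨hl, h⟩
    · refine Or.inr ⟨hrevA l hl, ?_⟩
      have h0 : rv l 0 = l lst := by
        simp [hrv, hlst, Fin.rev_zero]
      have h1 : rv l lst = l 0 := by
        simp [hrv, hlst, Fin.rev_last]
      rw [h0, h1, Sym2.eq_swap]
      exact h
  have hrvinj : Function.Injective rv := by
    intro l1 l2 h
    funext i
    have := congrFun h i.rev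
    simpa [hrv, Fin.rev_rev] using this
  have hA2 : A.ncard ≤ 2 * A'.ncard := by
    have hsub : A ⊆ A' ∪ rv '' A' := by
      intro l hl
      rcases hcover l hl with h | h
      · exact Or.inl h
      · refine Or.inr ⟨rv l, h, ?_⟩
        funext i; simp [hrv, Fin.rev_rev]
    calc A.ncard ≤ (A' ∪ rv '' A').ncard := Set.ncard_le_ncard hsub (Set.toFinite _)
      _ ≤ A'.ncard + (rv '' A').ncard := Set.ncard_union_le _ _
      _ = A'.ncard + A'.ncard := by rw [Set.ncard_image_of_injective _ hrvinj]
      _ = 2 * A'.ncard := by ring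
  -- truncation to paths
  set tr : (Fin (k + 2) → Fin n) → (Fin (k + 1) → Fin n) := fun l i => l i.castSucc with htr
  have htradj : ∀ l ∈ A, ∀ i : Fin k, G.Adj (tr l i.castSucc) (tr l i.succ) := by
    intro l hl i
    refine hl.2 (i.castSucc.castSucc) (i.succ.castSucc) ?_
    have h1 : ((i.castSucc.castSucc : Fin (k+2)) : ℕ) = (i : ℕ) := by simp
    have h2 : ((i.succ.castSucc : Fin (k+2)) : ℕ) = (i : ℕ) + 1 := by simp
    rw [h1, h2, Nat.mod_eq_of_lt (by omega)]
  have htrinj : ∀ l ∈ A, Function.Injective (tr l) :=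
    fun l hl => hl.1.comp (Fin.castSucc_injective _)
  have htradjrev : ∀ l ∈ A, ∀ i : Fin k,
      G.Adj (tr l (i.castSucc).rev) (tr l (i.succ).rev) := by
    intro l hl i
    have hik : (i : ℕ) < k := i.isLt
    set j : Fin k := ⟨k - 1 - (i : ℕ), by omega⟩ with hj
    have e1 : (i.castSucc : Fin (k+1)).rev = j.succ := by
      apply Fin.ext
      rw [Fin.val_rev]
      simp [hj]
      omega
    have e2 : (i.succ : Fin (k+1)).rev = j.castSucc := by
      apply Fin.ext
      rw [Fin.val_rev]
      simp [hj]
      omega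
    rw [e1, e2]
    exact (htradj l hl j).symm
  set φ : (Fin (k + 2) → Fin n) → ((Fin (k + 1) → Fin n) × (Bool × Fin (arboricity G))) :=
    fun l => if tr l 0 ≤ tr l (Fin.last k)
      then (tr l, (true, f s(l 0, l lst)))
      else ((fun i => tr l i.rev), (false, f s(l 0, l lst))) with hφ
  set T : Set ((Fin (k + 1) → Fin n) × (Bool × Fin (arboricity G))) :=
    B ×ˢ (Set.univ : Set (Bool × Fin (arboricity G))) with hT
  have hphi1 : ∀ l, tr l 0 ≤ tr l (Fin.last k) → φ l = (tr l, (true, f s(l 0, l lst))) := by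
    intro l h
    simp only [hφ]
    rw [if_pos h]
  have hphi2 : ∀ l, ¬ tr l 0 ≤ tr l (Fin.last k) →
      φ l = ((fun i => tr l i.rev), (false, f s(l 0, l lst))) := by
    intro l h
    simp only [hφ]
    rw [if_neg h]
  have hmaps : ∀ l ∈ A', φ l ∈ T := by
    intro l hl
    by_cases hcmp : tr l 0 ≤ tr l (Fin.last k)
    · rw [hphi1 l hcmp]
      exact ⟨⟨htrinj l hl.1, htradj l hl.1, hcmp⟩, Set.mem_univ _⟩
    · rw [hphi2 l hcmp]
      refine ⟨⟨?_, ?_, ?_⟩, Set.mem_univ _⟩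
      · exact (htrinj l hl.1).comp Fin.rev_injective
      · exact htradjrev l hl.1
      · show tr l (Fin.rev 0) ≤ tr l (Fin.rev (Fin.last k))
        rw [Fin.rev_zero, Fin.rev_last]
        exact le_of_not_ge hcmp
  have hinjOn : Set.InjOn φ A' := by
    intro l1 h1 l2 h2 heq
    have main : tr l1 = tr l2 → f s(l1 0, l1 lst) = f s(l2 0, l2 lst) → l1 = l2 := by
      intro htreq hcol
      have h00 : l1 0 = l2 0 := by
        have := congrFun htreq 0
        simpa [htr] using this
      have e1 := h1.2
      have e2 := h2.2
      rw [hcol, h00] at e1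
      rw [e1] at e2
      have hlaste := Option.some.inj e2
      funext x
      induction x using Fin.lastCases with
      | last => exact hlaste
      | cast i => exact congrFun htreq i
    by_cases c1 : tr l1 0 ≤ tr l1 (Fin.last k) <;>
      by_cases c2 : tr l2 0 ≤ tr l2 (Fin.last k)
    · rw [hphi1 l1 c1, hphi1 l2 c2] at heq
      simp only [Prod.mk.injEq] at heq
      exact main heq.1 heq.2.2
    · rw [hphi1 l1 c1, hphi2 l2 c2] at heq
      simp only [Prod.mk.injEq] at heq
      exact absurd heq.2.1 (by simp)
    · rw [hphi2 l1 c1, hphi1 l2 c2] at heq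
      simp only [Prod.mk.injEq] at heq
      exact absurd heq.2.1 (by simp)
    · rw [hphi2 l1 c1, hphi2 l2 c2] at heq
      simp only [Prod.mk.injEq] at heq
      refine main ?_ heq.2.2
      funext i
      have := congrFun heq.1 i.rev
      simp only [Fin.rev_rev] at this
      exact this
  have hTcard : T.ncard = B.ncard * (2 * arboricity G) := by
    rw [hT, ← Nat.card_coe_set_eq, Nat.card_congr (Equiv.Set.prod _ _), Nat.card_prod,
      Nat.card_coe_set_eq]
    congr 1
    rw [Nat.card_congr (Equiv.Set.univ _), Nat.card_eq_fintype_card]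
    simp [Fintype.card_prod]
  have hA'B : A'.ncard ≤ B.ncard * (2 * arboricity G) := by
    rw [← hTcard]
    exact Set.ncard_le_ncard_of_injOn φ hmaps hinjOn (Set.toFinite _)
  -- final arithmetic
  have hAr : (A.ncard : ℝ) ≤ 4 * (arboricity G : ℝ) * (B.ncard : ℝ) := by
    have hnat : A.ncard ≤ 4 * (arboricity G * B.ncard) := by
      calc A.ncard ≤ 2 * A'.ncard := hA2
        _ ≤ 2 * (B.ncard * (2 * arboricity G)) := Nat.mul_le_mul_left _ hA'B
        _ = 4 * (arboricity G * B.ncard) := by ring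
    have := (Nat.cast_le (α := ℝ)).mpr hnat
    push_cast at this
    linarith
  have hcc : cycleCount G (k + 2) = A.ncard / (2 * (k + 2)) := rfl
  have hpc : pathCount G k = B.ncard := rfl
  rw [hcc, hpc]
  have hk1 : (1 : ℝ) ≤ (k : ℝ) := by exact_mod_cast hk
  have hkpos : (0 : ℝ) < (k : ℝ) := by linarith
  have ha0 : (0 : ℝ) ≤ (arboricity G : ℝ) := Nat.cast_nonneg _
  have hb0 : (0 : ℝ) ≤ (B.ncard : ℝ) := Nat.cast_nonneg _
  calc ((A.ncard / (2 * (k + 2)) : ℕ) : ℝ)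
      ≤ (A.ncard : ℝ) / ((2 * (k + 2) : ℕ) : ℝ) := Nat.cast_div_le
    _ ≤ 2 / (k : ℝ) * (arboricity G : ℝ) * (B.ncard : ℝ) := by
        push_cast
        rw [div_le_iff₀ (by positivity : (0 : ℝ) < 2 * ((k : ℝ) + 2))]
        have expand : 2 / (k : ℝ) * (arboricity G : ℝ) * (B.ncard : ℝ) * (2 * ((k : ℝ) + 2))
            = (4 * (arboricity G : ℝ) * (B.ncard : ℝ) * ((k : ℝ) + 2)) / (k : ℝ) := by
          field_simp
          ring
        rw [expand, le_div_iff₀ hkpos]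
        nlinarith [mul_le_mul_of_nonneg_right hAr (le_of_lt hkpos),
          mul_nonneg ha0 hb0]
end

section
/- For every integer k ≥ 1, a finite simple graph G with n vertices and degeneracy δ contains at most O(δ^{k+1} n^{k+1}) cycles of length 2k+2 and at most O(δ^{k+1} n^k) cycles of length 2k+1. -/
open SimpleGraph Finset MeasureTheory ProbabilityTheory

attribute [local instance] Classical.propDecidable

section Aux

variable {n : ℕ} (G : SimpleGraph (Fin n))

lemma degen_mem_n : n ∈ {d : ℕ | ∀ s : Finset (Fin n), s.Nonempty →
    ∃ v ∈ s, ((s : Set (Fin n)) ∩ {u | G.Adj v u}).ncard ≤ d} := by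
  intro s hs
  obtain ⟨v, hv⟩ := hs
  refine ⟨v, hv, ?_⟩
  calc ((s : Set (Fin n)) ∩ {u | G.Adj v u}).ncard
      ≤ (Set.univ : Set (Fin n)).ncard :=
        Set.ncard_le_ncard (Set.subset_univ _) Set.finite_univ
    _ = n := by simp [Set.ncard_univ]

lemma degen_le_n : degeneracy G ≤ n := Nat.sInf_le (degen_mem_n G)

lemma degen_spec : ∀ s : Finset (Fin n), s.Nonempty →
    ∃ v ∈ s, ((s : Set (Fin n)) ∩ {u | G.Adj v u}).ncard ≤ degeneracy G :=
  Nat.sInf_mem (⟨n, degen_mem_n G⟩ : Set.Nonempty _)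

/-- Out-neighborhood w.r.t. a rank function. -/
noncomputable def outN (r : Fin n → ℕ) (u : Fin n) : Finset (Fin n) :=
  Finset.univ.filter (fun w => G.Adj u w ∧ r u < r w)

lemma mem_outN (r : Fin n → ℕ) (u v : Fin n) :
    v ∈ outN G r u ↔ G.Adj u v ∧ r u < r v := by simp [outN]

lemma exists_rank : ∃ r : Fin n → ℕ, Function.Injective r ∧
    ∀ v, (outN G r v).card ≤ degeneracy G := by
  have H : ∀ s : Finset (Fin n), ∃ r : Fin n → ℕ, Set.InjOn r s ∧
      ∀ v ∈ s, (s.filter (fun u => G.Adj v u ∧ r v < r u)).card ≤ degeneracy G := by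
    intro s
    induction s using Finset.strongInduction with
    | _ s ih =>
      rcases s.eq_empty_or_nonempty with rfl | hs
      · exact ⟨fun v => (v : ℕ), by simp, by simp⟩
      · obtain ⟨v, hv, hvcard⟩ := degen_spec G s hs
        have hvf : (s.filter (fun u => G.Adj v u)).card ≤ degeneracy G := by
          have hEq : ((s : Set (Fin n)) ∩ {u | G.Adj v u}) =
              ↑(s.filter (fun u => G.Adj v u)) := by
            ext x; simp [and_comm]
          rw [hEq, Set.ncard_coe_finset] at hvcard
          exact hvcard
        obtain ⟨r, hrinj, hrb⟩ := ih (s.erase v) (Finset.erase_ssubset hv)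
        refine ⟨fun u => if u = v then 0 else r u + 1, ?_, ?_⟩
        · intro a ha b hb hab
          simp only at hab
          by_cases hav : a = v
          · by_cases hbv : b = v
            · rw [hav, hbv]
            · rw [if_pos hav, if_neg hbv] at hab; omega
          · by_cases hbv : b = v
            · rw [if_neg hav, if_pos hbv] at hab; omega
            · rw [if_neg hav, if_neg hbv] at hab
              exact hrinj (Finset.mem_erase.2 ⟨hav, ha⟩) (Finset.mem_erase.2 ⟨hbv, hb⟩) (by omega)
        · intro u hu
          by_cases huv : u = v
          · subst huv
            refine le_trans (Finset.card_le_card ?_) hvf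
            intro x hx
            simp only [Finset.mem_filter] at hx ⊢
            exact ⟨hx.1, hx.2.1⟩
          · refine le_trans (Finset.card_le_card ?_) (hrb u (Finset.mem_erase.2 ⟨huv, hu⟩))
            intro x hx
            simp only [Finset.mem_filter, huv, if_false] at hx
            have hxv : x ≠ v := by
              intro hxv
              simp [hxv] at hx
            simp only [Finset.mem_filter, Finset.mem_erase] at hx ⊢
            refine ⟨⟨hxv, hx.1⟩, hx.2.1, ?_⟩
            have := hx.2.2
            simp [hxv] at this
            omega
  obtain ⟨r, hrinj, hrb⟩ := H Finset.univ
  refine ⟨r, fun a b hab => hrinj (by simp) (by simp) hab, fun v => ?_⟩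
  have := hrb v (Finset.mem_univ v)
  simpa [outN] using this

/-- Index of `v` inside `outN G r u`. -/
noncomputable def rIdx (r : Fin n → ℕ) (u v : Fin n) : ℕ :=
  ((outN G r u).filter (fun w => w < v)).card

lemma rIdx_lt (r : Fin n → ℕ) {u v : Fin n} (hv : v ∈ outN G r u) :
    rIdx G r u v < (outN G r u).card := by
  apply Finset.card_lt_card
  constructor
  · exact Finset.filter_subset _ _
  · intro hsub
    have := hsub hv
    simp at this

lemma rIdx_mono (r : Fin n → ℕ) {u v w : Fin n} (hv : v ∈ outN G r u)
    (hw : w ∈ outN G r u) (hvw : v < w) : rIdx G r u v < rIdx G r u w := by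
  apply Finset.card_lt_card
  constructor
  · intro x hx
    simp only [Finset.mem_filter] at hx ⊢
    exact ⟨hx.1, lt_trans hx.2 hvw⟩
  · intro hsub
    have : v ∈ (outN G r u).filter (fun w' => w' < v) :=
      hsub (by simp only [Finset.mem_filter]; exact ⟨hv, hvw⟩)
    simp at this

lemma rIdx_inj (r : Fin n → ℕ) {u v w : Fin n} (hv : v ∈ outN G r u)
    (hw : w ∈ outN G r u) (h : rIdx G r u v = rIdx G r u w) : v = w := by
  rcases lt_trichotomy v w with h1 | h1 | h1
  · exact absurd h (Nat.ne_of_lt (rIdx_mono G r hv hw h1))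
  · exact h1
  · exact absurd h.symm (Nat.ne_of_lt (rIdx_mono G r hw hv h1))

end Aux

section Phi

variable {n ℓ : ℕ} [NeZero ℓ]

/-- The encoding of a cycle tuple. -/
noncomputable def phi (G : SimpleGraph (Fin n)) (r : Fin n → ℕ) (l : Fin ℓ → Fin n)
    (i : Fin ℓ) : Fin n ⊕ Bool × ℕ :=
  if l i ∈ outN G r (l (i - 1)) then .inr (true, rIdx G r (l (i - 1)) (l i))
  else if l i ∈ outN G r (l (i + 1)) then .inr (false, rIdx G r (l (i + 1)) (l i))
  else .inl (l i)

variable (G : SimpleGraph (Fin n)) (r : Fin n → ℕ)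

lemma phi_injOn (hr : Function.Injective r) {l l' : Fin ℓ → Fin n}
    (h : ∀ i, phi G r l i = phi G r l' i) : l = l' := by
  have main : ∀ m : ℕ, ∀ i : Fin ℓ, r (l i) = m → l i = l' i := by
    intro m
    induction m using Nat.strong_induction_on with
    | _ m ih =>
      intro i him
      have hi := h i
      unfold phi at hi
      by_cases c1 : l i ∈ outN G r (l (i - 1))
      · rw [if_pos c1] at hi
        by_cases c1' : l' i ∈ outN G r (l' (i - 1))
        · rw [if_pos c1'] at hi
          simp only [Sum.inr.injEq, Prod.mk.injEq] at hi
          have hrank : r (l (i - 1)) < r (l i) := ((mem_outN G r _ _).1 c1).2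
          have hprev : l (i - 1) = l' (i - 1) := ih (r (l (i - 1))) (by omega) _ rfl
          rw [← hprev] at c1' hi
          exact rIdx_inj G r c1 c1' hi.2
        · rw [if_neg c1'] at hi
          by_cases c2' : l' i ∈ outN G r (l' (i + 1)) <;> simp [c2'] at hi
      · rw [if_neg c1] at hi
        by_cases c2 : l i ∈ outN G r (l (i + 1))
        · rw [if_pos c2] at hi
          by_cases c1' : l' i ∈ outN G r (l' (i - 1))
          · rw [if_pos c1'] at hi; simp at hi
          · rw [if_neg c1'] at hi
            by_cases c2' : l' i ∈ outN G r (l' (i + 1))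
            · rw [if_pos c2'] at hi
              simp only [Sum.inr.injEq, Prod.mk.injEq] at hi
              have hrank : r (l (i + 1)) < r (l i) := ((mem_outN G r _ _).1 c2).2
              have hnext : l (i + 1) = l' (i + 1) := ih (r (l (i + 1))) (by omega) _ rfl
              rw [← hnext] at c2' hi
              exact rIdx_inj G r c2 c2' hi.2
            · rw [if_neg c2'] at hi; simp at hi
        · rw [if_neg c2] at hi
          by_cases c1' : l' i ∈ outN G r (l' (i - 1))
          · rw [if_pos c1'] at hi; simp at hi
          · rw [if_neg c1'] at hi
            by_cases c2' : l' i ∈ outN G r (l' (i + 1))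
            · rw [if_pos c2'] at hi; simp at hi
            · rw [if_neg c2'] at hi
              simpa using hi
  funext i
  exact main (r (l i)) i rfl

end Phi

section Count

variable {n ℓ : ℕ}

/-- For a cycle tuple, the set of "locally minimal" positions has size ≤ ℓ/2,
and the encoding `phi` is `inl` exactly there. -/
lemma leftset_card_le (hℓ : 3 ≤ ℓ) (G : SimpleGraph (Fin n)) (r : Fin n → ℕ)
    (hrinj : Function.Injective r) (l : Fin ℓ → Fin n)
    (hlinj : Function.Injective l)
    (hadj : ∀ i : Fin ℓ, haveI : NeZero ℓ := ⟨by omega⟩; G.Adj (l i) (l (i + 1))) :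
    haveI : NeZero ℓ := ⟨by omega⟩
    (Finset.univ.filter (fun i : Fin ℓ => (phi G r l i).isLeft)).card ≤ ℓ / 2 := by
  haveI : NeZero ℓ := ⟨by omega⟩
  set L := Finset.univ.filter (fun i : Fin ℓ => (phi G r l i).isLeft) with hL
  have hone : ((1 : Fin ℓ) : ℕ) = 1 := by
    rw [Fin.val_one']; exact Nat.mod_eq_of_lt (by omega)
  have hne : ∀ i : Fin ℓ, i + 1 ≠ i := by
    intro i hh
    nth_rewrite 2 [← add_zero i] at hh
    have h10 : (1 : Fin ℓ) = 0 := add_left_cancel hh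
    apply_fun Fin.val at h10
    rw [hone] at h10
    simp at h10
  have key : ∀ i ∈ L, i + 1 ∉ L := by
    intro i hiL hi1L
    simp only [hL, Finset.mem_filter, Finset.mem_univ, true_and] at hiL hi1L
    -- phi at i is inl, so both conditions fail at i
    have c2 : l i ∉ outN G r (l (i + 1)) := by
      intro c
      unfold phi at hiL
      by_cases c1 : l i ∈ outN G r (l (i - 1))
      · rw [if_pos c1] at hiL; simp at hiL
      · rw [if_neg c1, if_pos c] at hiL; simp at hiL
    -- deduce phi at i+1 is inr
    have hmem : l (i + 1) ∈ outN G r (l ((i + 1) - 1)) := by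
      rw [add_sub_cancel_right]
      rw [mem_outN]
      refine ⟨hadj i, ?_⟩
      have hne2 : r (l i) ≠ r (l (i + 1)) := by
        intro he
        exact hne i (hlinj (hrinj he)).symm
      have : ¬ (r (l (i + 1)) < r (l i)) := by
        intro hlt
        exact c2 ((mem_outN G r _ _).2 ⟨(hadj i).symm, hlt⟩)
      omega
    unfold phi at hi1L
    rw [if_pos hmem] at hi1L
    simp at hi1L
  have hcard : L.card ≤ Lᶜ.card := by
    apply Finset.card_le_card_of_injOn (fun i => i + 1)
    · intro a ha
      simp only [Finset.mem_compl]
      simpa using key a ha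
    · intro a _ b _ hab
      exact add_right_cancel hab
  have h1 : Lᶜ.card = ℓ - L.card := by
    rw [Finset.card_compl]; simp
  have h2 : L.card ≤ ℓ := le_trans (Finset.card_le_univ L) (by simp)
  omega

/-- Key counting bound for cycle tuples. -/
lemma key_bound (hℓ : 3 ≤ ℓ) (G : SimpleGraph (Fin n)) :
    {l : Fin ℓ → Fin n | Function.Injective l ∧
      ∀ i j : Fin ℓ, ((i : ℕ) + 1) % ℓ = (j : ℕ) → G.Adj (l i) (l j)}.ncard ≤
    ∑ T ∈ (Finset.univ : Finset (Fin ℓ)).powerset,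
      if T.card ≤ ℓ / 2 then n ^ T.card * (2 * degeneracy G) ^ (ℓ - T.card) else 0 := by
  haveI : NeZero ℓ := ⟨by omega⟩
  obtain ⟨r, hrinj, hrb⟩ := exists_rank G
  set S := {l : Fin ℓ → Fin n | Function.Injective l ∧
      ∀ i j : Fin ℓ, ((i : ℕ) + 1) % ℓ = (j : ℕ) → G.Adj (l i) (l j)} with hS
  -- adjacency in Fin-arithmetic form
  have hone : ((1 : Fin ℓ) : ℕ) = 1 := by
    rw [Fin.val_one']; exact Nat.mod_eq_of_lt (by omega)
  have hadj : ∀ l ∈ S, ∀ i : Fin ℓ, G.Adj (l i) (l (i + 1)) := by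
    intro l hl i
    refine hl.2 i (i + 1) ?_
    rw [Fin.add_def]
    simp only [Fin.val_mk]
    rw [hone]
  -- the target finset
  set lefts : Finset (Fin n ⊕ Bool × ℕ) :=
    Finset.univ.map ⟨Sum.inl, Sum.inl_injective⟩ with hlefts
  set rights : Finset (Fin n ⊕ Bool × ℕ) :=
    ((Finset.univ : Finset Bool) ×ˢ Finset.range (degeneracy G)).map
      ⟨Sum.inr, Sum.inr_injective⟩ with hrights
  set A : Finset (Fin ℓ → Fin n ⊕ Bool × ℕ) :=
    (Fintype.piFinset (fun _ : Fin ℓ => lefts ∪ rights)).filter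
      (fun g => (Finset.univ.filter (fun i => (g i).isLeft)).card ≤ ℓ / 2) with hA
  have hmaps : ∀ l ∈ S, phi G r l ∈ A := by
    intro l hl
    simp only [hA, Finset.mem_filter]
    constructor
    · rw [Fintype.mem_piFinset]
      intro i
      unfold phi
      by_cases c1 : l i ∈ outN G r (l (i - 1))
      · rw [if_pos c1]
        apply Finset.mem_union_right
        simp only [hrights, Finset.mem_map, Function.Embedding.coeFn_mk]
        refine ⟨(true, rIdx G r (l (i - 1)) (l i)), ?_, rfl⟩
        simp only [Finset.mem_product, Finset.mem_univ, true_and, Finset.mem_range]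
        exact lt_of_lt_of_le (rIdx_lt G r c1) (hrb _)
      · rw [if_neg c1]
        by_cases c2 : l i ∈ outN G r (l (i + 1))
        · rw [if_pos c2]
          apply Finset.mem_union_right
          simp only [hrights, Finset.mem_map, Function.Embedding.coeFn_mk]
          refine ⟨(false, rIdx G r (l (i + 1)) (l i)), ?_, rfl⟩
          simp only [Finset.mem_product, Finset.mem_univ, true_and, Finset.mem_range]
          exact lt_of_lt_of_le (rIdx_lt G r c2) (hrb _)
        · rw [if_neg c2]
          apply Finset.mem_union_left
          simp [hlefts]
    · exact leftset_card_le hℓ G r hrinj l hl.1 (hadj l hl)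
  have hinj : Set.InjOn (phi G r) S := by
    intro l hl l' hl' he
    exact phi_injOn G r hrinj (fun i => congrFun he i)
  have h1 : S.ncard ≤ (↑A : Set (Fin ℓ → Fin n ⊕ Bool × ℕ)).ncard := by
    exact Set.ncard_le_ncard_of_injOn (phi G r) (fun l hl => hmaps l hl) hinj
      (Set.toFinite _)
  rw [Set.ncard_coe_finset] at h1
  refine le_trans h1 ?_
  -- fiber decomposition over the left-sets
  have hfib : A.card = ∑ T ∈ (Finset.univ : Finset (Fin ℓ)).powerset,
      (A.filter (fun g => Finset.univ.filter (fun i => (g i).isLeft) = T)).card := by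
    apply Finset.card_eq_sum_card_fiberwise
    intro g _
    simp
  rw [hfib]
  apply Finset.sum_le_sum
  intro T _
  by_cases hT : T.card ≤ ℓ / 2
  · rw [if_pos hT]
    have hsub : A.filter (fun g => Finset.univ.filter (fun i => (g i).isLeft) = T) ⊆
        Fintype.piFinset (fun i : Fin ℓ => if i ∈ T then lefts else rights) := by
      intro g hg
      simp only [Finset.mem_filter, hA] at hg
      obtain ⟨⟨hgP, _⟩, hgT⟩ := hg
      rw [Fintype.mem_piFinset] at hgP ⊢
      intro i
      by_cases hiT : i ∈ T
      · rw [if_pos hiT]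
        have hgl : (g i).isLeft := by
          rw [← hgT] at hiT
          simpa using hiT
        rcases hgi : g i with v | x
        · simp [hlefts]
        · rw [hgi] at hgl; simp at hgl
      · rw [if_neg hiT]
        have : ¬ (g i).isLeft := by
          intro hli
          exact hiT (by rw [← hgT]; simpa using hli)
        rcases hgi : g i with v | x
        · rw [hgi] at this; simp at this
        · have := hgP i
          rw [hgi] at this
          rcases Finset.mem_union.1 this with hm | hm
          · simp [hlefts] at hm
          · exact hm
    refine le_trans (Finset.card_le_card hsub) (le_of_eq ?_)
    rw [Fintype.card_piFinset]
    have hlc : lefts.card = n := by simp [hlefts]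
    have hrc : rights.card = 2 * degeneracy G := by
      simp [hrights, Finset.card_product]
    calc ∏ i : Fin ℓ, (if i ∈ T then lefts else rights).card
        = ∏ i : Fin ℓ, (if i ∈ T then n else 2 * degeneracy G) := by
          apply Finset.prod_congr rfl
          intro i _
          rw [apply_ite Finset.card, hlc, hrc]
      _ = n ^ T.card * (2 * degeneracy G) ^ (ℓ - T.card) := by
          rw [← Finset.prod_mul_prod_compl T]
          rw [Finset.prod_congr rfl (fun i hi => if_pos hi),
            Finset.prod_congr rfl (fun i hi => if_neg (Finset.mem_compl.1 hi))]
          rw [Finset.prod_const, Finset.prod_const, Finset.card_compl]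
          simp
  · rw [if_neg hT]
    rw [Finset.card_eq_zero.2]
    apply Finset.eq_empty_of_forall_notMem
    intro g hg
    simp only [Finset.mem_filter, hA] at hg
    apply hT
    rw [← hg.2]
    exact hg.1.2

end Count

lemma term_bound (n δ a e m : ℕ) (hδ : δ ≤ n) (hm : m ≤ e) :
    n ^ m * (2 * δ) ^ (a + e - m) ≤ 2 ^ (a + e) * (δ ^ a * n ^ e) := by
  have h1 : a + e - m = a + (e - m) := by omega
  have h2 : e - m + m = e := by omega
  calc n ^ m * (2 * δ) ^ (a + e - m)
      = 2 ^ (a + (e - m)) * (δ ^ a * (δ ^ (e - m) * n ^ m)) := by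
        rw [h1, mul_pow, pow_add 2, pow_add δ]; ring
    _ ≤ 2 ^ (a + e) * (δ ^ a * (n ^ (e - m) * n ^ m)) := by
        refine Nat.mul_le_mul (Nat.pow_le_pow_right (by norm_num) (by omega)) ?_
        exact Nat.mul_le_mul le_rfl (Nat.mul_le_mul (Nat.pow_le_pow_left hδ _) le_rfl)
    _ = 2 ^ (a + e) * (δ ^ a * n ^ e) := by rw [← pow_add, h2]

lemma set_bound (k e ℓ n : ℕ) (hℓe : ℓ = (k + 1) + e) (h2 : ℓ / 2 ≤ e) (h3 : 3 ≤ ℓ)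
    (G : SimpleGraph (Fin n)) :
    {l : Fin ℓ → Fin n | Function.Injective l ∧
      ∀ i j : Fin ℓ, ((i : ℕ) + 1) % ℓ = (j : ℕ) → G.Adj (l i) (l j)}.ncard ≤
    4 ^ ℓ * (degeneracy G ^ (k + 1) * n ^ e) := by
  refine le_trans (key_bound h3 G) ?_
  have hbd : ∀ T ∈ (Finset.univ : Finset (Fin ℓ)).powerset,
      (if T.card ≤ ℓ / 2 then n ^ T.card * (2 * degeneracy G) ^ (ℓ - T.card) else 0) ≤
      2 ^ ℓ * (degeneracy G ^ (k + 1) * n ^ e) := by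
    intro T _
    by_cases hT : T.card ≤ ℓ / 2
    · rw [if_pos hT]
      have := term_bound n (degeneracy G) (k + 1) e T.card (degen_le_n G) (by omega)
      rw [← hℓe] at this
      exact this
    · rw [if_neg hT]; exact Nat.zero_le _
  calc ∑ T ∈ (Finset.univ : Finset (Fin ℓ)).powerset,
        (if T.card ≤ ℓ / 2 then n ^ T.card * (2 * degeneracy G) ^ (ℓ - T.card) else 0)
      ≤ (Finset.univ : Finset (Fin ℓ)).powerset.card •
        (2 ^ ℓ * (degeneracy G ^ (k + 1) * n ^ e)) :=
        Finset.sum_le_card_nsmul _ _ _ hbd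
    _ = 2 ^ ℓ * (2 ^ ℓ * (degeneracy G ^ (k + 1) * n ^ e)) := by
        rw [Finset.card_powerset, smul_eq_mul]
        simp
    _ = 4 ^ ℓ * (degeneracy G ^ (k + 1) * n ^ e) := by
        rw [← mul_assoc, ← pow_add, ← two_mul, pow_mul]
        norm_num


/-- For `k ≥ 1`, a graph with `n` vertices and degeneracy `δ` contains `O(δ^(k+1) n^(k+1))`
cycles of length `2k+2` and `O(δ^(k+1) n^k)` cycles of length `2k+1`. -/
theorem cycleCount_bigO (k : ℕ) (hk : 1 ≤ k) :
    ∃ C : ℕ, ∀ (n : ℕ) (G : SimpleGraph (Fin n)),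
      cycleCount G (2 * k + 2) ≤ C * degeneracy G ^ (k + 1) * n ^ (k + 1) ∧
      cycleCount G (2 * k + 1) ≤ C * degeneracy G ^ (k + 1) * n ^ k := by
  refine ⟨4 ^ (2 * k + 2), fun n G => ⟨?_, ?_⟩⟩
  · have hb := set_bound k (k + 1) (2 * k + 2) n (by omega) (by omega) (by omega) G
    unfold cycleCount
    apply le_trans (Nat.div_le_self _ _)
    apply le_trans hb
    rw [mul_assoc]
  · have hb := set_bound k k (2 * k + 1) n (by omega) (by omega) (by omega) G
    unfold cycleCount
    apply le_trans (Nat.div_le_self _ _)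
    apply le_trans hb
    rw [mul_assoc]
    have h4 : (4 : ℕ) ^ (2 * k + 1) ≤ 4 ^ (2 * k + 2) :=
      Nat.pow_le_pow_right (by norm_num) (Nat.le_succ _)
    exact Nat.mul_le_mul h4 le_rfl
end

section
/- Every cycle of odd length in a graph whose vertices are linearly ordered contains three consecutive vertices (in the cyclic order of the cycle) whose labels are monotonic, i.e., there exist consecutive cycle vertices u, v, w with u < v < w or u > v > w in the given linear order. -/
open SimpleGraph Finset MeasureTheory ProbabilityTheory

/-- Every odd cycle in a graph with linearly ordered vertices contains three
cyclically consecutive vertices with monotonic labels. -/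
theorem odd_cycle_has_monotonic_triple (n k : ℕ) (hk : 1 ≤ k) (G : SimpleGraph (Fin n))
    (l : Fin (2 * k + 1) → Fin n) (hinj : Function.Injective l)
    (hadj : ∀ i j : Fin (2 * k + 1), ((i : ℕ) + 1) % (2 * k + 1) = (j : ℕ) →
      G.Adj (l i) (l j)) :
    ∃ i j t : Fin (2 * k + 1),
      ((i : ℕ) + 1) % (2 * k + 1) = (j : ℕ) ∧ ((j : ℕ) + 1) % (2 * k + 1) = (t : ℕ) ∧
      ((l i < l j ∧ l j < l t) ∨ (l t < l j ∧ l j < l i)) := by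
  by_contra hcon
  push_neg at hcon
  have hval1 : ((1 : Fin (2 * k + 1)) : ℕ) = 1 := by
    simp [Fin.val_one']; omega
  have step : ∀ i : Fin (2 * k + 1), ((i + 1 : Fin (2 * k + 1)) : ℕ) = ((i : ℕ) + 1) % (2 * k + 1) := by
    intro i; rw [Fin.val_add, hval1]
  have hadjne : ∀ i : Fin (2 * k + 1), l i ≠ l (i + 1) := by
    intro i h
    have hne : i ≠ i + 1 := by
      intro h'
      have h2 := congrArg Fin.val h'
      rw [step i] at h2
      have hi : (i : ℕ) < 2 * k + 1 := i.isLt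
      rcases Nat.lt_or_ge ((i : ℕ) + 1) (2 * k + 1) with hlt | hge
      · rw [Nat.mod_eq_of_lt hlt] at h2; omega
      · rw [show (i : ℕ) + 1 = 2 * k + 1 by omega, Nat.mod_self] at h2; omega
    exact hne (hinj h)
  have key : ∀ i : Fin (2 * k + 1), (l (i + 1) < l (i + 1 + 1)) ↔ ¬ (l i < l (i + 1)) := by
    intro i
    have h := hcon i (i + 1) (i + 1 + 1) (step i).symm (step (i + 1)).symm
    constructor
    · intro h2 h1
      exact absurd h2 (not_lt.mpr (h.1 h1))
    · intro h1
      have hlt : l (i + 1) < l i := lt_of_le_of_ne (not_lt.mp h1) (hadjne i).symm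
      by_contra h2
      have h3 : l (i + 1 + 1) < l (i + 1) :=
        lt_of_le_of_ne (not_lt.mp h2) (hadjne (i + 1)).symm
      exact absurd (h.2 h3) (not_le.mpr hlt)
  set b : Fin (2 * k + 1) → Bool := fun i => decide (l i < l (i + 1)) with hb
  have key' : ∀ i, b (i + 1) = ! b i := by
    intro i
    show decide (l (i + 1) < l (i + 1 + 1)) = ! decide (l i < l (i + 1))
    rw [← decide_not]
    exact decide_eq_decide.mpr (key i)
  open Fin.NatCast in
  have par : ∀ j : ℕ, b ((j : Fin (2 * k + 1))) = xor (decide (Odd j)) (b 0) := by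
    intro j
    induction j with
    | zero => simp
    | succ j ih =>
      have hc : ((j + 1 : ℕ) : Fin (2 * k + 1)) = ((j : ℕ) : Fin (2 * k + 1)) + 1 := by
        push_cast; ring
      have hd : decide (Odd (j + 1)) = ! decide (Odd j) := by
        rw [← decide_not]
        exact decide_eq_decide.mpr (by simp [Nat.odd_add_one])
      rw [hc, key', ih, hd]
      cases decide (Odd j) <;> cases b 0 <;> simp
  open Fin.NatCast in
  have hcast : (((2 * k + 1 : ℕ)) : Fin (2 * k + 1)) = 0 := by
    ext; simp [Fin.val_natCast]
  have hfin := par (2 * k + 1)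
  rw [hcast] at hfin
  have hodd : Odd (2 * k + 1) := ⟨k, by ring⟩
  simp [hodd] at hfin
end

section
/- For k ≥ 2, in a finite simple graph G with indexed vertices, the number #C_{2k}^*(G) of cycles of length 2k containing three consecutive vertices with monotonic indices satisfies #C_{2k}^*(G) ≤ 2·α(G)·S_2^*(G)·#P_{2k−5}(G), where for k = 2 one sets #P_{−1}(G) = 1. -/
open SimpleGraph Finset MeasureTheory ProbabilityTheory

/- ### Auxiliary lemmas -/

private lemma path_ne_of_pos {V : Type*} {G : SimpleGraph V} {u v : V} {p : G.Walk u v}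
    (hp : p.IsPath) (hl : 0 < p.length) : u ≠ v := by
  cases p with
  | nil => simp at hl
  | cons h q =>
    rw [SimpleGraph.Walk.cons_isPath_iff] at hp
    rintro rfl
    exact hp.2 q.end_mem_support

private lemma forest_next {n : ℕ} (F : SimpleGraph (Fin n)) (hF : F.IsAcyclic) :
    ∃ g : Fin n → Option (Fin n), ∀ u v, F.Adj u v → g u = some v ∨ g v = some u := by
  classical
  have hne : ∀ u : Fin n, (Finset.univ.filter (fun w => F.Reachable u w)).Nonempty :=
    fun u => ⟨u, by simp [SimpleGraph.Reachable.refl]⟩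
  set r : Fin n → Fin n := fun u => (Finset.univ.filter (fun w => F.Reachable u w)).min' (hne u)
    with hrdef
  have hreach : ∀ u, F.Reachable u (r u) := by
    intro u
    have := Finset.min'_mem _ (hne u)
    simpa [hrdef] using this
  set p : ∀ u : Fin n, F.Walk u (r u) := fun u => ((hreach u).some.toPath : F.Path u (r u)).1
    with hpdef
  have hpath : ∀ u, (p u).IsPath := fun u => ((hreach u).some.toPath).2
  refine ⟨fun u => if h : r u = u then none else some ((p u).getVert 1), ?_⟩
  intro u v huv
  have hru : r u = r v := by
    apply le_antisymm
    · apply Finset.min'_le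
      simp only [Finset.mem_filter, Finset.mem_univ, true_and]
      exact (huv.reachable).trans (hreach v)
    · apply Finset.min'_le
      simp only [Finset.mem_filter, Finset.mem_univ, true_and]
      exact (huv.symm.reachable).trans (hreach u)
  by_cases hu : u ∈ (p v).support
  · right
    have hadj : F.Adj v u := huv.symm
    have hq := (hpath v).takeUntil hu
    have hcons : (Walk.cons hadj Walk.nil).IsPath := by
      simp [Walk.cons_isPath_iff, hadj.ne]
    have he : ((p v).takeUntil u hu) = Walk.cons hadj Walk.nil := by
      have h1 : (⟨(p v).takeUntil u hu, hq⟩ : F.Path v u) = ⟨Walk.cons hadj Walk.nil, hcons⟩ :=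
        (SimpleGraph.isAcyclic_iff_path_unique.mp hF) _ _
      exact congrArg Subtype.val h1
    have hspec := (p v).take_spec hu
    rw [he] at hspec
    have hpv : p v = Walk.cons hadj ((p v).dropUntil u hu) := hspec.symm
    have hg1 : (p v).getVert 1 = u := by
      conv_lhs => rw [hpv]
      rw [show (1:ℕ) = 0 + 1 from rfl, Walk.getVert_cons_succ]
      exact Walk.getVert_zero _
    have hlen : 0 < (p v).length := by
      rw [hpv]; simp
    have hrv : ¬ r v = v := fun h => (path_ne_of_pos (hpath v) hlen) h.symm
    simp only [hrv, dite_false, hg1]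
  · left
    have hcopy : ((p v).copy rfl hru.symm : F.Walk v (r u)).IsPath := by
      rw [Walk.isPath_copy]; exact hpath v
    have hu' : u ∉ ((p v).copy rfl hru.symm).support := by
      rw [Walk.support_copy]; exact hu
    have hw1p : (Walk.cons huv ((p v).copy rfl hru.symm)).IsPath :=
      (Walk.cons_isPath_iff _ _).mpr ⟨hcopy, hu'⟩
    have heq : p u = Walk.cons huv ((p v).copy rfl hru.symm) := by
      have h1 : (⟨p u, hpath u⟩ : F.Path u (r u)) = ⟨_, hw1p⟩ :=
        (SimpleGraph.isAcyclic_iff_path_unique.mp hF) _ _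
      exact congrArg Subtype.val h1
    have hg1 : (p u).getVert 1 = v := by
      conv_lhs => rw [heq]
      rw [show (1:ℕ) = 0 + 1 from rfl, Walk.getVert_cons_succ]
      exact Walk.getVert_zero _
    have hlen : 0 < (p u).length := by
      rw [heq]; simp
    have hruu : ¬ r u = u := fun h => (path_ne_of_pos (hpath u) hlen) h.symm
    simp only [hruu, dite_false, hg1]

private lemma acyclic_of_subsingleton {V : Type*} {S : Set (Sym2 V)} (h : S.Subsingleton) :
    (SimpleGraph.fromEdgeSet S).IsAcyclic := by
  intro v c hc
  have h3 := hc.three_le_length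
  have hnodup : c.edges.Nodup := hc.edges_nodup
  have hlen : c.edges.length = c.length := c.length_edges
  have h0 : 0 < c.edges.length := by omega
  have h1 : 1 < c.edges.length := by omega
  have hmem0 : c.edges.get ⟨0, h0⟩ ∈ (SimpleGraph.fromEdgeSet S).edgeSet :=
    c.edges_subset_edgeSet (List.get_mem _ _)
  have hmem1 : c.edges.get ⟨1, h1⟩ ∈ (SimpleGraph.fromEdgeSet S).edgeSet :=
    c.edges_subset_edgeSet (List.get_mem _ _)
  rw [SimpleGraph.edgeSet_fromEdgeSet] at hmem0 hmem1
  have heq : c.edges.get ⟨0, h0⟩ = c.edges.get ⟨1, h1⟩ := h hmem0.1 hmem1.1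
  have := (List.Nodup.get_inj_iff hnodup).mp heq
  simp at this

private lemma orient_exists {n : ℕ} (G : SimpleGraph (Fin n)) :
    ∃ D : Fin n → Finset (Fin n), (∀ v, (D v).card ≤ arboricity G) ∧
      ∀ u v, G.Adj u v → v ∈ D u ∨ u ∈ D v := by
  classical
  have hne : {k : ℕ | ∃ f : Sym2 (Fin n) → Fin k,
      ∀ i : Fin k, (SimpleGraph.fromEdgeSet {e | e ∈ G.edgeSet ∧ f e = i}).IsAcyclic}.Nonempty := by
    refine ⟨Fintype.card (Sym2 (Fin n)), Fintype.equivFin (Sym2 (Fin n)), fun i => ?_⟩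
    apply acyclic_of_subsingleton
    intro e he e' he'
    exact (Fintype.equivFin (Sym2 (Fin n))).injective (he.2.trans he'.2.symm)
  obtain ⟨f, hf⟩ := Nat.sInf_mem hne
  choose g hg using fun i => forest_next _ (hf i)
  refine ⟨fun v => Finset.univ.biUnion (fun i => (g i v).toFinset), ?_, ?_⟩
  · intro v
    calc (Finset.univ.biUnion (fun i => (g i v).toFinset)).card
        ≤ ∑ i : Fin (arboricity G), (g i v).toFinset.card := Finset.card_biUnion_le
      _ ≤ ∑ _i : Fin (arboricity G), 1 := by
          apply Finset.sum_le_sum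
          intro i _
          cases g i v <;> simp
      _ = arboricity G := by simp
  · intro u v huv
    have hmem : s(u, v) ∈ {e | e ∈ G.edgeSet ∧ f e = f s(u, v)} := ⟨huv, rfl⟩
    have hadj : (SimpleGraph.fromEdgeSet {e | e ∈ G.edgeSet ∧ f e = f s(u, v)}).Adj u v :=
      (SimpleGraph.fromEdgeSet_adj _).mpr ⟨hmem, huv.ne⟩
    rcases hg (f s(u, v)) u v hadj with h | h
    · left
      exact Finset.mem_biUnion.mpr ⟨f s(u, v), Finset.mem_univ _, by simp [h]⟩
    · right
      exact Finset.mem_biUnion.mpr ⟨f s(u, v), Finset.mem_univ _, by simp [h]⟩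

private lemma core_lemma {β : Type*} [LinearOrder β] (m : ℕ) (hm2 : 2 ≤ m) (heven : Even m)
    (L : ℕ → β) (P : β → β → Prop)
    (hper : ∀ t, L (t + m) = L t)
    (hinj : ∀ a b, a < m → b < m → L a = L b → a = b)
    (hcov : ∀ t, P (L t) (L (t + 1)) ∨ P (L (t + 1)) (L t))
    (hmono : ∃ t, (L t < L (t + 1) ∧ L (t + 1) < L (t + 2)) ∨
      (L (t + 2) < L (t + 1) ∧ L (t + 1) < L t)) :
    ∃ t, (L t < L (t + 1) ∧ P (L t) (L (t + (m - 1)))) ∨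
      (L t < L (t + (m - 1)) ∧ P (L t) (L (t + 1))) := by
  have hm0 : 0 < m := by omega
  obtain ⟨mh, hmh⟩ := heven
  have hperq : ∀ q t, L (t + m * q) = L t := by
    intro q
    induction q with
    | zero => simp
    | succ q ih =>
      intro t
      have h : t + m * (q + 1) = (t + m * q) + m := by ring
      rw [h, hper, ih]
  have hmod : ∀ a, L a = L (a % m) := by
    intro a
    conv_lhs => rw [show a = a % m + m * (a / m) from by
      rw [Nat.add_comm]; exact (Nat.div_add_mod a m).symm]
    exact hperq _ _
  have hmodL : ∀ a b, a % m = b % m → L a = L b := by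
    intro a b hab
    rw [hmod a, hmod b, hab]
  have hne : ∀ t, L t ≠ L (t + 1) := by
    intro t heq
    have h1 : L (t % m) = L ((t + 1) % m) := by
      rw [← hmod t, ← hmod (t + 1)]; exact heq
    have h2 : t % m = (t + 1) % m := hinj _ _ (Nat.mod_lt _ hm0) (Nat.mod_lt _ hm0) h1
    have h3 : t ≡ t + 1 [MOD m] := h2
    have h4 : m ∣ 1 := by
      have := (Nat.modEq_iff_dvd' (Nat.le_succ t)).mp h3
      simpa using this
    have := Nat.dvd_one.mp h4
    omega
  by_contra hcon
  push_neg at hcon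
  have H1 : ∀ t, L t < L (t + 1) → ¬ P (L t) (L (t + (m - 1))) := fun t h => ((hcon t).1 h)
  have H2 : ∀ t, L t < L (t + (m - 1)) → ¬ P (L t) (L (t + 1)) := fun t h => ((hcon t).2 h)
  have step : ∀ t, L (t + 2) < L (t + 2 + 1) → L t < L (t + 1) := by
    intro t h2
    by_contra h0
    have h0' : L (t + 1) < L t := lt_of_le_of_ne (not_lt.mp h0) (hne t).symm
    have hx : L (t + 1) < L ((t + 1) + (m - 1)) := by
      rw [show t + 1 + (m - 1) = t + m by omega, hper]
      exact h0'
    have h2' := H2 (t + 1) hx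
    have hc : P (L (t + 2)) (L (t + 1)) := by
      rcases hcov (t + 1) with h | h
      · exact absurd h h2'
      · exact h
    have h1' := H1 (t + 2) h2
    rw [show t + 2 + (m - 1) = (t + 1) + m by omega, hper] at h1'
    exact h1' hc
  have stepIter : ∀ r t, L (t + 2 * r) < L (t + 2 * r + 1) → L t < L (t + 1) := by
    intro r
    induction r with
    | zero => intro t h; simpa using h
    | succ r ih =>
      intro t h
      have h' : L (t + 2 * r + 2) < L (t + 2 * r + 2 + 1) := by
        rw [show t + 2 * r + 2 = t + 2 * (r + 1) by ring]
        exact h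
      exact ih t (step _ h')
  have propUp : ∀ x y, x < m → x % 2 = y % 2 → ¬ (L x < L (x + 1)) → ¬ (L y < L (y + 1)) := by
    intro x y hx hpar hnasc hasc
    obtain ⟨rr, hrr⟩ : ∃ rr, x + 2 * rr = y + m := ⟨(y + m - x) / 2, by omega⟩
    have h1 : L (y + m) < L (y + m + 1) := by
      rw [hper, show y + m + 1 = (y + 1) + m by ring, hper]
      exact hasc
    rw [← hrr] at h1
    exact hnasc (stepIter rr x h1)
  obtain ⟨a, ha_mem, hamin⟩ := Finset.exists_min_image (Finset.range m) L ⟨0, by simpa using hm0⟩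
  obtain ⟨c, hc_mem, hcmax⟩ := Finset.exists_max_image (Finset.range m) L ⟨0, by simpa using hm0⟩
  rw [Finset.mem_range] at ha_mem hc_mem
  have hasc_a : L a < L (a + 1) := by
    have h1 : L a ≤ L ((a + 1) % m) := hamin _ (Finset.mem_range.mpr (Nat.mod_lt _ hm0))
    rw [← hmod (a + 1)] at h1
    exact lt_of_le_of_ne h1 (hne a)
  have hnasc_c : ¬ (L c < L (c + 1)) := by
    have h1 : L ((c + 1) % m) ≤ L c := hcmax _ (Finset.mem_range.mpr (Nat.mod_lt _ hm0))
    rw [← hmod (c + 1)] at h1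
    intro h
    exact absurd h (not_lt.mpr h1)
  obtain ⟨t, hmono⟩ := hmono
  rcases hmono with ⟨h1, h2⟩ | ⟨h1, h2⟩
  · have ht1 : L (t + 1) < L (t + 1 + 1) := by
      rw [show t + 1 + 1 = t + 2 by ring]; exact h2
    rcases Nat.even_or_odd (c + t) with hp | hp
    · obtain ⟨w, hw⟩ := hp
      exact propUp c t hc_mem (by omega) hnasc_c h1
    · obtain ⟨w, hw⟩ := hp
      exact propUp c (t + 1) hc_mem (by omega) hnasc_c ht1
  · have hnt : ¬ (L t < L (t + 1)) := not_lt.mpr (le_of_lt h2)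
    have hnt1 : ¬ (L (t + 1) < L (t + 1 + 1)) := by
      rw [show t + 1 + 1 = t + 2 by ring]
      exact not_lt.mpr (le_of_lt h1)
    rcases Nat.even_or_odd (a + t) with hp | hp
    · have h3 : ¬ (L (t % m) < L (t % m + 1)) := by
        intro h
        have : L t < L (t + 1) := by
          have e1 : L (t % m) = L t := (hmod t).symm
          have e2 : L (t % m + 1) = L (t + 1) := hmodL _ _ ((Nat.mod_modEq t m).add_right 1)
          rw [e1, e2] at h; exact h
        exact hnt this
      refine propUp (t % m) a (Nat.mod_lt _ hm0) ?_ h3 hasc_a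
      obtain ⟨w, hw⟩ := hp
      have hd := Nat.div_add_mod t m
      have hz : m * (t / m) = 2 * (mh * (t / m)) := by rw [hmh]; ring
      omega
    · have h3 : ¬ (L ((t + 1) % m) < L ((t + 1) % m + 1)) := by
        intro h
        have : L (t + 1) < L (t + 1 + 1) := by
          have e1 : L ((t + 1) % m) = L (t + 1) := (hmod (t + 1)).symm
          have e2 : L ((t + 1) % m + 1) = L (t + 1 + 1) :=
            hmodL _ _ ((Nat.mod_modEq (t + 1) m).add_right 1)
          rw [e1, e2] at h; exact h
        exact hnt1 this
      refine propUp ((t + 1) % m) a (Nat.mod_lt _ hm0) ?_ h3 hasc_a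
      obtain ⟨w, hw⟩ := hp
      have hd := Nat.div_add_mod (t + 1) m
      have hz : m * ((t + 1) / m) = 2 * (mh * ((t + 1) / m)) := by rw [hmh]; ring
      omega

/- ### counting helpers -/

private lemma ncard_biUnion_le {ι β : Type*} [Finite β] (s : Finset ι) (f : ι → Set β) :
    (⋃ i ∈ s, f i).ncard ≤ ∑ i ∈ s, (f i).ncard := by
  classical
  induction s using Finset.induction with
  | empty => simp
  | insert _ _ h ih =>
    rename_i a s'
    rw [Finset.set_biUnion_insert, Finset.sum_insert h]
    exact le_trans (Set.ncard_union_le _ _) (Nat.add_le_add le_rfl ih)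

private def starSet {n : ℕ} (G : SimpleGraph (Fin n)) : Set (Fin n × Fin n × Fin n) :=
  {s | G.Adj s.2.1 s.1 ∧ s.1 < s.2.1 ∧ G.Adj s.2.1 s.2.2 ∧ s.1 ≠ s.2.2}

private lemma starSet_ncard_le {n : ℕ} (G : SimpleGraph (Fin n)) :
    (starSet G).ncard ≤ S2star G := by
  classical
  have hlow : ∀ b : Fin n, {j | G.Adj b j ∧ j < b}.ncard =
      (Finset.univ.filter (fun a => G.Adj b a ∧ a < b)).card := by
    intro b
    rw [Set.ncard_eq_toFinset_card']
    congr 1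
    ext a
    simp
  have hdeg : ∀ b : Fin n, deg G b = (Finset.univ.filter (fun c => G.Adj b c)).card := by
    intro b
    rw [deg, Set.ncard_eq_toFinset_card']
    congr 1
    ext a
    simp
  have hsub : (starSet G).toFinset ⊆ Finset.univ.biUnion (fun b =>
      (Finset.univ.filter (fun a => G.Adj b a ∧ a < b)).biUnion (fun a =>
        ((Finset.univ.filter (fun c => G.Adj b c)).erase a).image (fun c => (a, b, c)))) := by
    intro s hs
    rw [Set.mem_toFinset] at hs
    obtain ⟨h1, h2, h3, h4⟩ := hs
    refine Finset.mem_biUnion.mpr ⟨s.2.1, Finset.mem_univ _, ?_⟩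
    refine Finset.mem_biUnion.mpr ⟨s.1, by simp [h1, h2], ?_⟩
    refine Finset.mem_image.mpr ⟨s.2.2, ?_, rfl⟩
    exact Finset.mem_erase.mpr ⟨Ne.symm h4, by simp [h3]⟩
  rw [Set.ncard_eq_toFinset_card']
  calc (starSet G).toFinset.card
      ≤ _ := Finset.card_le_card hsub
    _ ≤ ∑ b : Fin n, ((Finset.univ.filter (fun a => G.Adj b a ∧ a < b)).biUnion (fun a =>
        ((Finset.univ.filter (fun c => G.Adj b c)).erase a).image (fun c => (a, b, c)))).card :=
        Finset.card_biUnion_le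
    _ ≤ ∑ b : Fin n, ∑ a ∈ Finset.univ.filter (fun a => G.Adj b a ∧ a < b),
        (((Finset.univ.filter (fun c => G.Adj b c)).erase a).image (fun c => (a, b, c))).card := by
        exact Finset.sum_le_sum fun b _ => Finset.card_biUnion_le
    _ ≤ ∑ b : Fin n, ∑ a ∈ Finset.univ.filter (fun a => G.Adj b a ∧ a < b),
        ((Finset.univ.filter (fun c => G.Adj b c)).erase a).card := by
        refine Finset.sum_le_sum fun b _ => Finset.sum_le_sum fun a _ => Finset.card_image_le
    _ = ∑ b : Fin n, ∑ a ∈ Finset.univ.filter (fun a => G.Adj b a ∧ a < b),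
        ((Finset.univ.filter (fun c => G.Adj b c)).card - 1) := by
        refine Finset.sum_congr rfl fun b _ => Finset.sum_congr rfl fun a ha => ?_
        rw [Finset.card_erase_of_mem]
        simp only [Finset.mem_filter, Finset.mem_univ, true_and] at ha ⊢
        exact ha.1
    _ = ∑ b : Fin n, (Finset.univ.filter (fun a => G.Adj b a ∧ a < b)).card *
        ((Finset.univ.filter (fun c => G.Adj b c)).card - 1) := by
        refine Finset.sum_congr rfl fun b _ => ?_
        rw [Finset.sum_const, smul_eq_mul]
    _ = S2star G := by
        refine Finset.sum_congr rfl fun b _ => ?_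
        rw [hlow b, hdeg b]

private def pathSet {n : ℕ} (G : SimpleGraph (Fin n)) (d : ℕ) : Set (Fin d → Fin n) :=
  {q | Function.Injective q ∧ (∀ (i : ℕ) (h : i + 1 < d), G.Adj (q ⟨i, by omega⟩) (q ⟨i + 1, h⟩)) ∧
     ∀ h0 : 0 < d, q ⟨0, h0⟩ ≤ q ⟨d - 1, by omega⟩}

private lemma pathSet_ncard_zero {n : ℕ} (G : SimpleGraph (Fin n)) : (pathSet G 0).ncard = 1 := by
  have h : pathSet G 0 = Set.univ := by
    ext q
    simp only [pathSet, Set.mem_setOf_eq, Set.mem_univ, iff_true]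
    refine ⟨fun a => a.elim0, fun i h => by omega, fun h0 => by omega⟩
  rw [h, Set.ncard_univ]
  simp [Nat.card_eq_fintype_card]

private lemma pathSet_ncard_succ {n : ℕ} (G : SimpleGraph (Fin n)) (p : ℕ) :
    (pathSet G (p + 1)).ncard = pathCount G p := by
  unfold pathCount
  congr 1
  ext q
  simp only [pathSet, Set.mem_setOf_eq]
  constructor
  · rintro ⟨h1, h2, h3⟩
    refine ⟨h1, fun i => ?_, ?_⟩
    · have h := h2 i.val (by omega)
      have e1 : i.castSucc = (⟨i.val, by omega⟩ : Fin (p + 1)) := rfl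
      have e2 : i.succ = (⟨i.val + 1, by omega⟩ : Fin (p + 1)) := rfl
      rw [e1, e2]
      exact h
    · have h := h3 (by omega)
      have e1 : (0 : Fin (p + 1)) = (⟨0, by omega⟩ : Fin (p + 1)) := rfl
      have e2 : Fin.last p = (⟨p + 1 - 1, by omega⟩ : Fin (p + 1)) := rfl
      rw [e1, e2]
      exact h
  · rintro ⟨h1, h2, h3⟩
    refine ⟨h1, fun i h => ?_, fun h0 => ?_⟩
    · have e := h2 ⟨i, by omega⟩
      exact e
    · exact h3

private def prD {n m : ℕ} (pos : ℕ → Fin m) (d : ℕ) (g : Fin m → Fin n) : Fin d → Fin n :=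
  fun j => g (pos (3 + j.val))

private def bfD {n m : ℕ} (pos : ℕ → Fin m) (d : ℕ) (g : Fin m → Fin n) : Bool :=
  if h : 0 < d then
    (if prD pos d g ⟨0, h⟩ ≤ prD pos d g ⟨d - 1, by omega⟩ then true else false)
  else true

private def qfD {n m : ℕ} (pos : ℕ → Fin m) (d : ℕ) (g : Fin m → Fin n) : Fin d → Fin n :=
  if h : 0 < d then
    (if prD pos d g ⟨0, h⟩ ≤ prD pos d g ⟨d - 1, by omega⟩ then prD pos d g
     else prD pos d g ∘ Fin.rev)
  else prD pos d g

private lemma prD_recover {n m : ℕ} (pos : ℕ → Fin m) (d : ℕ) (g : Fin m → Fin n) :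
    prD pos d g = (if bfD pos d g then qfD pos d g else qfD pos d g ∘ Fin.rev) := by
  unfold bfD qfD
  by_cases h : 0 < d
  · by_cases hle : prD pos d g ⟨0, h⟩ ≤ prD pos d g ⟨d - 1, by omega⟩
    · rw [dif_pos h, dif_pos h, if_pos hle, if_pos hle]
      simp
    · rw [dif_pos h, dif_pos h, if_neg hle, if_neg hle]
      simp only [Bool.false_eq_true, if_false]
      funext j
      simp [Function.comp, Fin.rev_rev]
  · rw [dif_neg h, dif_neg h]
    simp

set_option maxHeartbeats 1000000 in
private lemma step3 {n : ℕ} (G : SimpleGraph (Fin n)) (m : ℕ) (hm4 : 4 ≤ m)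
    (DD : Fin n → Finset (Fin n)) (hDcard : ∀ v, (DD v).card ≤ arboricity G)
    (hDcov : ∀ u v, G.Adj u v → v ∈ DD u ∨ u ∈ DD v)
    (pos : ℕ → Fin m) (hposval : ∀ t, (pos t).val = t % m) :
    {g : Fin m → Fin n | Function.Injective g ∧
      (∀ t : ℕ, G.Adj (g (pos t)) (g (pos (t + 1)))) ∧
      g (pos 0) < g (pos 1) ∧ g (pos (m - 1)) ∈ DD (g (pos 0))}.ncard
      ≤ S2star G * (arboricity G * (2 * (pathSet G (m - 4)).ncard)) := by
  classical
  have hm0 : 0 < m := by omega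
  set d := m - 4 with hddef
  have hposlt : ∀ t : ℕ, t < m → (pos t).val = t := by
    intro t ht
    rw [hposval t]
    exact Nat.mod_eq_of_lt ht
  set B : Set (Fin m → Fin n) := {g | Function.Injective g ∧
    (∀ t : ℕ, G.Adj (g (pos t)) (g (pos (t + 1)))) ∧
    g (pos 0) < g (pos 1) ∧ g (pos (m - 1)) ∈ DD (g (pos 0))} with hBdef
  set Φ : (Fin m → Fin n) → (Fin n × Fin n × Fin n) × Fin n × Bool × (Fin d → Fin n) :=
    fun g => ((g (pos 0), g (pos 1), g (pos 2)), g (pos (m - 1)), bfD pos d g, qfD pos d g)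
    with hΦdef
  have hΦinj : Set.InjOn Φ B := by
    intro g hg g' hg' heq
    simp only [hΦdef, Prod.mk.injEq] at heq
    obtain ⟨⟨e0, e1, e2⟩, e3, e4, e5⟩ := heq
    have hpr : prD pos d g = prD pos d g' := by
      rw [prD_recover pos d g, prD_recover pos d g', e4, e5]
    funext i
    have hiv := i.isLt
    by_cases h0 : i.val = 0
    · rw [show i = pos 0 from Fin.ext (by rw [hposlt 0 (by omega)]; exact h0)]
      exact e0
    by_cases h1 : i.val = 1
    · rw [show i = pos 1 from Fin.ext (by rw [hposlt 1 (by omega)]; exact h1)]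
      exact e1
    by_cases h2 : i.val = 2
    · rw [show i = pos 2 from Fin.ext (by rw [hposlt 2 (by omega)]; exact h2)]
      exact e2
    by_cases h3 : i.val = m - 1
    · rw [show i = pos (m - 1) from Fin.ext (by rw [hposlt (m - 1) (by omega)]; exact h3)]
      exact e3
    · have hj : i.val - 3 < d := by omega
      have hieq : i = pos (3 + (i.val - 3)) := Fin.ext (by rw [hposlt _ (by omega)]; omega)
      rw [hieq]
      exact congrFun hpr ⟨i.val - 3, hj⟩
  have hB3 : ∀ g ∈ B, (Φ g).1 ∈ starSet G ∧ (Φ g).2.1 ∈ DD (Φ g).1.1 ∧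
      (Φ g).2.2.2 ∈ pathSet G d := by
    intro g hg
    obtain ⟨hginj, hgcyc, hglt, hgD⟩ := hg
    have hprinj : Function.Injective (prD pos d g) := by
      intro j j' h
      have hjlt := j.isLt
      have hjlt' := j'.isLt
      have h3 := congrArg Fin.val (hginj h)
      rw [hposlt _ (by omega), hposlt _ (by omega)] at h3
      exact Fin.ext (by omega)
    have hpradj : ∀ (i : ℕ) (h : i + 1 < d),
        G.Adj (prD pos d g ⟨i, by omega⟩) (prD pos d g ⟨i + 1, h⟩) := by
      intro i h
      have hc := hgcyc (3 + i)
      show G.Adj (g (pos (3 + i))) (g (pos (3 + (i + 1))))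
      rw [show 3 + (i + 1) = (3 + i) + 1 by ring]
      exact hc
    refine ⟨⟨(hgcyc 0).symm, hglt, ?_, ?_⟩, hgD, ?_⟩
    · have hc := hgcyc 1
      show G.Adj (g (pos 1)) (g (pos 2))
      exact hc
    · show g (pos 0) ≠ g (pos 2)
      intro hc
      have h3 := congrArg Fin.val (hginj hc)
      rw [hposlt 0 (by omega), hposlt 2 (by omega)] at h3
      omega
    · show qfD pos d g ∈ pathSet G d
      unfold qfD
      by_cases h : 0 < d
      · by_cases hle : prD pos d g ⟨0, h⟩ ≤ prD pos d g ⟨d - 1, by omega⟩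
        · rw [dif_pos h, if_pos hle]
          exact ⟨hprinj, fun i hi => hpradj i hi, fun h0 => hle⟩
        · rw [dif_pos h, if_neg hle]
          refine ⟨hprinj.comp Fin.rev_injective, ?_, ?_⟩
          · intro i hi1
            show G.Adj (prD pos d g (Fin.rev ⟨i, by omega⟩)) (prD pos d g (Fin.rev ⟨i + 1, hi1⟩))
            have e1 : (Fin.rev (⟨i, by omega⟩ : Fin d)) = ⟨(d - 2 - i) + 1, by omega⟩ := by
              apply Fin.ext
              simp only [Fin.val_rev]
              try omega
            have e2 : (Fin.rev (⟨i + 1, hi1⟩ : Fin d)) = ⟨d - 2 - i, by omega⟩ := by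
              apply Fin.ext
              simp only [Fin.val_rev]
              try omega
            rw [e1, e2]
            exact (hpradj (d - 2 - i) (by omega)).symm
          · intro h0
            show prD pos d g (Fin.rev ⟨0, h0⟩) ≤ prD pos d g (Fin.rev ⟨d - 1, by omega⟩)
            have e1 : (Fin.rev (⟨0, h0⟩ : Fin d)) = ⟨d - 1, by omega⟩ := by
              apply Fin.ext
              simp only [Fin.val_rev]
              try omega
            have e2 : (Fin.rev (⟨d - 1, by omega⟩ : Fin d)) = ⟨0, h0⟩ := by
              apply Fin.ext
              simp only [Fin.val_rev]
              try omega
            rw [e1, e2]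
            exact le_of_not_ge hle
      · rw [dif_neg h]
        exact ⟨hprinj, fun i hi => absurd hi (by omega), fun h0 => absurd h0 (by omega)⟩
  set SF := (Set.toFinite (starSet G)).toFinset with hSF
  set PF := (Set.toFinite (pathSet G d)).toFinset with hPF
  set keyF := SF.biUnion (fun s =>
      ((DD s.1) ×ˢ ((Finset.univ : Finset Bool) ×ˢ PF)).image (fun y => (s, y))) with hkeyF
  have himg : (Φ '' B) ⊆ ↑keyF := by
    rintro _ ⟨g, hg, rfl⟩
    obtain ⟨hs, hx, hq⟩ := hB3 g hg
    rw [Finset.mem_coe, hkeyF]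
    refine Finset.mem_biUnion.mpr ⟨(Φ g).1, (Set.Finite.mem_toFinset _).mpr hs, ?_⟩
    refine Finset.mem_image.mpr ⟨(Φ g).2, ?_, rfl⟩
    exact Finset.mem_product.mpr ⟨hx, Finset.mem_product.mpr
      ⟨Finset.mem_univ _, (Set.Finite.mem_toFinset _).mpr hq⟩⟩
  have hPFcard : PF.card = (pathSet G d).ncard := by
    rw [hPF]
    exact (Set.ncard_eq_toFinset_card _ _).symm
  have hSFcard : SF.card = (starSet G).ncard := by
    rw [hSF]
    exact (Set.ncard_eq_toFinset_card _ _).symm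
  calc B.ncard = (Φ '' B).ncard := (Set.ncard_image_of_injOn hΦinj).symm
    _ ≤ (↑keyF : Set _).ncard := Set.ncard_le_ncard himg (Set.toFinite _)
    _ = keyF.card := Set.ncard_coe_finset _
    _ ≤ ∑ s ∈ SF, (((DD s.1) ×ˢ ((Finset.univ : Finset Bool) ×ˢ PF)).image
          (fun y => (s, y))).card := Finset.card_biUnion_le
    _ ≤ ∑ s ∈ SF, ((DD s.1) ×ˢ ((Finset.univ : Finset Bool) ×ˢ PF)).card :=
        Finset.sum_le_sum fun s _ => Finset.card_image_le
    _ = ∑ s ∈ SF, (DD s.1).card * (2 * PF.card) := by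
        refine Finset.sum_congr rfl fun s _ => ?_
        rw [Finset.card_product, Finset.card_product, Finset.card_univ, Fintype.card_bool]
    _ ≤ ∑ _s ∈ SF, arboricity G * (2 * PF.card) :=
        Finset.sum_le_sum fun s _ => Nat.mul_le_mul_right _ (hDcard _)
    _ = SF.card * (arboricity G * (2 * PF.card)) := by
        rw [Finset.sum_const, smul_eq_mul]
    _ ≤ S2star G * (arboricity G * (2 * (pathSet G d).ncard)) := by
        rw [hPFcard, hSFcard]
        exact Nat.mul_le_mul_right _ (starSet_ncard_le G)

set_option maxHeartbeats 1000000 in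
private lemma main_bound {n : ℕ} (G : SimpleGraph (Fin n)) (m : ℕ) (hm4 : 4 ≤ m)
    (heven : Even m) :
    {l : Fin m → Fin n | Function.Injective l ∧
      (∀ i j : Fin m, ((i : ℕ) + 1) % m = (j : ℕ) → G.Adj (l i) (l j)) ∧
      ∃ i j t : Fin m, ((i : ℕ) + 1) % m = (j : ℕ) ∧ ((j : ℕ) + 1) % m = (t : ℕ) ∧
        ((l i < l j ∧ l j < l t) ∨ (l t < l j ∧ l j < l i))}.ncard
      ≤ (2 * m) * (2 * arboricity G * S2star G * (pathSet G (m - 4)).ncard) := by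
  classical
  have hm0 : 0 < m := by omega
  haveI : NeZero m := ⟨by omega⟩
  obtain ⟨DD, hDcard, hDcov⟩ := orient_exists G
  set pos : ℕ → Fin m := fun t => ⟨t % m, Nat.mod_lt _ hm0⟩ with hposdef
  -- basic facts about pos
  have hposcast : ∀ a b : ℕ, (a : ZMod m) = b → pos a = pos b := by
    intro a b h
    apply Fin.ext
    exact (ZMod.natCast_eq_natCast_iff a b m).mp h
  have hcastlt : ∀ a b : ℕ, a < m → b < m → (a : ZMod m) = b → a = b := by
    intro a b ha hb h
    have := congrArg ZMod.val h
    rwa [ZMod.val_cast_of_lt ha, ZMod.val_cast_of_lt hb] at this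
  have hposfin : ∀ i : Fin m, pos i.val = i := fun i => Fin.ext (Nat.mod_eq_of_lt i.isLt)
  have hposlt : ∀ t : ℕ, t < m → (pos t).val = t := fun t ht => Nat.mod_eq_of_lt ht
  -- the rooted set
  set B : Set (Fin m → Fin n) := {g | Function.Injective g ∧
    (∀ t : ℕ, G.Adj (g (pos t)) (g (pos (t + 1)))) ∧
    g (pos 0) < g (pos 1) ∧ g (pos (m - 1)) ∈ DD (g (pos 0))} with hBdef
  set τ : Fin m × Bool → Fin m → Fin m := fun σ i =>
    if σ.2 then pos (σ.1.val + (m - i.val)) else pos (σ.1.val + i.val) with hτdef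
  -- Step I : covering
  have hcover : ∀ l ∈ {l : Fin m → Fin n | Function.Injective l ∧
      (∀ i j : Fin m, ((i : ℕ) + 1) % m = (j : ℕ) → G.Adj (l i) (l j)) ∧
      ∃ i j t : Fin m, ((i : ℕ) + 1) % m = (j : ℕ) ∧ ((j : ℕ) + 1) % m = (t : ℕ) ∧
        ((l i < l j ∧ l j < l t) ∨ (l t < l j ∧ l j < l i))},
      ∃ σ : Fin m × Bool, ∃ g ∈ B, g ∘ τ σ = l := by
    intro l hl
    obtain ⟨hinj, hcyc, hmono⟩ := hl
    set L : ℕ → Fin n := fun t => l (pos t) with hLdef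
    have hLper : ∀ t, L (t + m) = L t := by
      intro t
      exact congrArg l (hposcast _ _ (by push_cast; simp))
    have hLwinj : ∀ a b, a < m → b < m → L a = L b → a = b := by
      intro a b ha hb h
      have h3 := congrArg Fin.val (hinj h)
      simpa [hposdef, Nat.mod_eq_of_lt ha, Nat.mod_eq_of_lt hb] using h3
    have hLcyc : ∀ t, G.Adj (L t) (L (t + 1)) := by
      intro t
      apply hcyc (pos t) (pos (t + 1))
      show (t % m + 1) % m = (t + 1) % m
      exact (Nat.mod_modEq t m).add_right 1
    have hLmono : ∃ t0, (L t0 < L (t0 + 1) ∧ L (t0 + 1) < L (t0 + 2)) ∨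
        (L (t0 + 2) < L (t0 + 1) ∧ L (t0 + 1) < L t0) := by
      obtain ⟨i, j, t, hij, hjt, hord⟩ := hmono
      refine ⟨i.val, ?_⟩
      have e1 : pos i.val = i := hposfin i
      have e2 : pos (i.val + 1) = j := Fin.ext hij
      have e3 : pos (i.val + 2) = t := by
        apply Fin.ext
        show (i.val + 2) % m = t.val
        calc (i.val + 2) % m = ((i.val + 1) % m + 1) % m :=
              ((Nat.mod_modEq (i.val + 1) m).add_right 1).symm
          _ = (j.val + 1) % m := by rw [hij]
          _ = t.val := hjt
      have f1 : L i.val = l i := congrArg l e1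
      have f2 : L (i.val + 1) = l j := congrArg l e2
      have f3 : L (i.val + 2) = l t := congrArg l e3
      rw [f1, f2, f3]
      exact hord
    obtain ⟨t0, hcase⟩ := core_lemma m (by omega) heven L (fun u v => v ∈ DD u) hLper hLwinj
      (fun t => hDcov _ _ (hLcyc t)) hLmono
    have hLZ : ∀ a b : ℕ, (a : ZMod m) = b → L a = L b := fun a b h => congrArg l (hposcast a b h)
    have hLinj2 : ∀ a b : ℕ, L a = L b → (a : ZMod m) = b := by
      intro a b h
      exact (ZMod.natCast_eq_natCast_iff a b m).mpr (congrArg Fin.val (hinj h))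
    rcases hcase with ⟨hasc, hP⟩ | ⟨hasc, hP⟩
    · -- forward rotation
      refine ⟨(pos (m - t0 % m), false), fun i => L (t0 + i.val), ⟨?_, ?_, ?_, ?_⟩, ?_⟩
      · intro i i' h
        have h2 := hLinj2 _ _ h
        push_cast at h2
        have h3 : ((i.val : ℕ) : ZMod m) = ((i'.val : ℕ) : ZMod m) := by
          exact add_left_cancel h2
        exact Fin.ext (hcastlt _ _ i.isLt i'.isLt h3)
      · intro t
        have e : ∀ s : ℕ, L (t0 + (pos s).val) = L (t0 + s) := by
          intro s
          show L (t0 + s % m) = L (t0 + s)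
          apply hLZ
          push_cast [ZMod.natCast_mod]
          ring
        show G.Adj (L (t0 + (pos t).val)) (L (t0 + (pos (t + 1)).val))
        rw [e t, e (t + 1), show t0 + (t + 1) = (t0 + t) + 1 by ring]
        exact hLcyc (t0 + t)
      · show L (t0 + (pos 0).val) < L (t0 + (pos 1).val)
        rw [hposlt 0 (by omega), hposlt 1 (by omega)]
        simpa using hasc
      · show L (t0 + (pos (m - 1)).val) ∈ DD (L (t0 + (pos 0).val))
        rw [hposlt (m - 1) (by omega), hposlt 0 (by omega)]
        simpa using hP
      · funext i
        show L (t0 + (τ (pos (m - t0 % m), false) i).val) = l i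
        have hτ : τ (pos (m - t0 % m), false) i = pos ((m - t0 % m) % m + i.val) := by
          simp [hτdef, hposdef]
        rw [hτ]
        have hmain : L (t0 + (pos ((m - t0 % m) % m + i.val)).val) = L i.val := by
          show L (t0 + ((m - t0 % m) % m + i.val) % m) = L i.val
          apply hLZ
          push_cast [ZMod.natCast_mod]
          rw [Nat.cast_sub (le_of_lt (Nat.mod_lt _ hm0))]
          push_cast [ZMod.natCast_mod]
          simp [ZMod.natCast_self]
        rw [hmain]
        exact congrArg l (hposfin i)
    · -- reflected rotation
      refine ⟨(pos t0, true), fun i => L (t0 + (m - i.val)), ⟨?_, ?_, ?_, ?_⟩, ?_⟩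
      · intro i i' h
        have h2 := hLinj2 _ _ h
        have e : ∀ j : Fin m, ((t0 + (m - j.val) : ℕ) : ZMod m) = (t0 : ZMod m) - (j.val : ℕ) := by
          intro j
          rw [Nat.cast_add, Nat.cast_sub (le_of_lt j.isLt), ZMod.natCast_self]
          ring
        rw [e i, e i'] at h2
        have h3 : ((i.val : ℕ) : ZMod m) = ((i'.val : ℕ) : ZMod m) := sub_right_inj.mp h2
        exact Fin.ext (hcastlt _ _ i.isLt i'.isLt h3)
      · intro t
        show G.Adj (L (t0 + (m - (pos t).val))) (L (t0 + (m - (pos (t + 1)).val)))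
        by_cases h : t % m = m - 1
        · have e1 : (pos t).val = m - 1 := h
          have e2 : (pos (t + 1)).val = 0 := by
            show (t + 1) % m = 0
            have h2 : (t + 1) % m = (t % m + 1) % m := ((Nat.mod_modEq t m).add_right 1).symm
            rw [h2, h, show m - 1 + 1 = m by omega, Nat.mod_self]
          rw [e1, e2, show m - (m - 1) = 1 by omega, Nat.sub_zero, hLper t0]
          exact (hLcyc t0).symm
        · have ht : t % m < m - 1 := by have := Nat.mod_lt t hm0; omega
          have e2 : (pos (t + 1)).val = t % m + 1 := by
            show (t + 1) % m = t % m + 1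
            have h2 : (t + 1) % m = (t % m + 1) % m := ((Nat.mod_modEq t m).add_right 1).symm
            rw [h2]
            exact Nat.mod_eq_of_lt (by omega)
          have e1 : (pos t).val = t % m := rfl
          rw [e1, e2, show t0 + (m - t % m) = (t0 + (m - (t % m + 1))) + 1 by omega]
          exact (hLcyc _).symm
      · show L (t0 + (m - (pos 0).val)) < L (t0 + (m - (pos 1).val))
        rw [hposlt 0 (by omega), hposlt 1 (by omega)]
        simp only [Nat.sub_zero]
        rw [hLper t0]
        exact hasc
      · show L (t0 + (m - (pos (m - 1)).val)) ∈ DD (L (t0 + (m - (pos 0).val)))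
        rw [hposlt (m - 1) (by omega), hposlt 0 (by omega),
          show m - (m - 1) = 1 by omega]
        simp only [Nat.sub_zero]
        rw [hLper t0]
        exact hP
      · funext i
        show L (t0 + (m - (τ (pos t0, true) i).val)) = l i
        have hτ : τ (pos t0, true) i = pos (t0 % m + (m - i.val)) := by
          simp [hτdef, hposdef]
        rw [hτ]
        have hmain : L (t0 + (m - (pos (t0 % m + (m - i.val))).val)) = L i.val := by
          show L (t0 + (m - (t0 % m + (m - i.val)) % m)) = L i.val
          apply hLZ
          rw [Nat.cast_add, Nat.cast_sub (le_of_lt (Nat.mod_lt _ hm0)), ZMod.natCast_mod,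
            Nat.cast_add, ZMod.natCast_mod, Nat.cast_sub (le_of_lt i.isLt), ZMod.natCast_self]
          ring
        rw [hmain]
        exact congrArg l (hposfin i)
  -- Step II : union bound
  have hstep2 : {l : Fin m → Fin n | Function.Injective l ∧
      (∀ i j : Fin m, ((i : ℕ) + 1) % m = (j : ℕ) → G.Adj (l i) (l j)) ∧
      ∃ i j t : Fin m, ((i : ℕ) + 1) % m = (j : ℕ) ∧ ((j : ℕ) + 1) % m = (t : ℕ) ∧
        ((l i < l j ∧ l j < l t) ∨ (l t < l j ∧ l j < l i))}.ncard ≤ (2 * m) * B.ncard := by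
    have hsub : {l : Fin m → Fin n | Function.Injective l ∧
        (∀ i j : Fin m, ((i : ℕ) + 1) % m = (j : ℕ) → G.Adj (l i) (l j)) ∧
        ∃ i j t : Fin m, ((i : ℕ) + 1) % m = (j : ℕ) ∧ ((j : ℕ) + 1) % m = (t : ℕ) ∧
          ((l i < l j ∧ l j < l t) ∨ (l t < l j ∧ l j < l i))} ⊆
        ⋃ σ ∈ (Finset.univ : Finset (Fin m × Bool)), (fun g => g ∘ τ σ) '' B := by
      intro l hl
      obtain ⟨σ, g, hg, hfeq⟩ := hcover l hl
      exact Set.mem_iUnion₂.mpr ⟨σ, Finset.mem_univ σ, ⟨g, hg, hfeq⟩⟩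
    calc {l : Fin m → Fin n | Function.Injective l ∧
        (∀ i j : Fin m, ((i : ℕ) + 1) % m = (j : ℕ) → G.Adj (l i) (l j)) ∧
        ∃ i j t : Fin m, ((i : ℕ) + 1) % m = (j : ℕ) ∧ ((j : ℕ) + 1) % m = (t : ℕ) ∧
          ((l i < l j ∧ l j < l t) ∨ (l t < l j ∧ l j < l i))}.ncard
        ≤ (⋃ σ ∈ (Finset.univ : Finset (Fin m × Bool)), (fun g => g ∘ τ σ) '' B).ncard :=
          Set.ncard_le_ncard hsub (Set.toFinite _)
      _ ≤ ∑ σ : Fin m × Bool, ((fun g => g ∘ τ σ) '' B).ncard := ncard_biUnion_le _ _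
      _ ≤ ∑ _σ : Fin m × Bool, B.ncard :=
          Finset.sum_le_sum (fun σ _ => Set.ncard_image_le (Set.toFinite _))
      _ = (Fintype.card (Fin m × Bool)) * B.ncard := by
          rw [Finset.sum_const, Finset.card_univ, smul_eq_mul]
      _ = (2 * m) * B.ncard := by
          simp only [Fintype.card_prod, Fintype.card_fin, Fintype.card_bool]
          ring
  -- Step III : key injection
  have hstep3 : B.ncard ≤ S2star G * (arboricity G * (2 * (pathSet G (m - 4)).ncard)) :=
    step3 G m hm4 DD hDcard hDcov pos (fun t => rfl)
  calc _ ≤ (2 * m) * B.ncard := hstep2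
    _ ≤ (2 * m) * (S2star G * (arboricity G * (2 * (pathSet G (m - 4)).ncard))) :=
        Nat.mul_le_mul_left _ hstep3
    _ = (2 * m) * (2 * arboricity G * S2star G * (pathSet G (m - 4)).ncard) := by ring

/-- For `k ≥ 2`, the number of `2k`-cycles with three consecutive vertices of monotonic
index satisfies `#C*_{2k}(G) ≤ 2 ⬝ α(G) ⬝ S₂*(G) ⬝ #P_{2k-5}(G)`, with `#P_{-1} = 1`. -/
theorem monoCycleCount_le (k : ℕ) (hk : 2 ≤ k) (n : ℕ) (G : SimpleGraph (Fin n)) :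
    monoCycleCount G (2 * k) ≤
      2 * arboricity G * S2star G * pathCountExt G (2 * (k : ℤ) - 5) := by
  have hP : (pathSet G (2 * k - 4)).ncard ≤ pathCountExt G (2 * (k : ℤ) - 5) := by
    rcases Nat.lt_or_ge k 3 with h3 | h3
    · have hk2 : k = 2 := by omega
      subst hk2
      rw [show (2 * 2 - 4 : ℕ) = 0 from rfl, pathSet_ncard_zero]
      unfold pathCountExt
      rw [if_neg (by norm_num)]
    · have he : (2 * k - 4 : ℕ) = (2 * k - 5) + 1 := by omega
      rw [he, pathSet_ncard_succ]
      unfold pathCountExt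
      rw [if_pos (by omega)]
      have ht : ((2 * (k : ℤ) - 5).toNat) = 2 * k - 5 := by omega
      rw [ht]
  have hmain := main_bound G (2 * k) (by omega) ⟨k, by ring⟩
  unfold monoCycleCount
  have hchain : {l : Fin (2 * k) → Fin n | Function.Injective l ∧
      (∀ i j : Fin (2 * k), ((i : ℕ) + 1) % (2 * k) = (j : ℕ) → G.Adj (l i) (l j)) ∧
      ∃ i j t : Fin (2 * k), ((i : ℕ) + 1) % (2 * k) = (j : ℕ) ∧
        ((j : ℕ) + 1) % (2 * k) = (t : ℕ) ∧
        ((l i < l j ∧ l j < l t) ∨ (l t < l j ∧ l j < l i))}.ncard ≤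
      (2 * (2 * k)) * (2 * arboricity G * S2star G * pathCountExt G (2 * (k : ℤ) - 5)) := by
    calc {l : Fin (2 * k) → Fin n | Function.Injective l ∧
        (∀ i j : Fin (2 * k), ((i : ℕ) + 1) % (2 * k) = (j : ℕ) → G.Adj (l i) (l j)) ∧
        ∃ i j t : Fin (2 * k), ((i : ℕ) + 1) % (2 * k) = (j : ℕ) ∧
          ((j : ℕ) + 1) % (2 * k) = (t : ℕ) ∧
          ((l i < l j ∧ l j < l t) ∨ (l t < l j ∧ l j < l i))}.ncard
        ≤ (2 * (2 * k)) * (2 * arboricity G * S2star G * (pathSet G (2 * k - 4)).ncard) := hmain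
      _ ≤ (2 * (2 * k)) * (2 * arboricity G * S2star G * pathCountExt G (2 * (k : ℤ) - 5)) :=
          Nat.mul_le_mul_left _ (Nat.mul_le_mul_left _ hP)
  exact Nat.div_le_of_le_mul hchain
end
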